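/- arXiv:math/0504357 — 4 statements merged into one kernel-verified Lean document; each statement's English description precedes it below -/
import Mathlib

section
/- Bilipschitz extension theorem for totally bounded sets: Let B(x,r) be an open ball in the Urysohn space 𝕌, let N ≥ 4 and let K satisfy (N − √(N² − 4N))/2 < K < (N + √(N² − 4N))/2. Let A ⊆ B(x,r) be a totally bounded set with x ∈ A, and let f : A → B(x,r) be a K-bilipschitz map which is N-bigood (with respect to the center x and radius r) and satisfies f(x) = x. Then there exists a bijection g : B(x,r) → B(x,r) such that: (1) g extends f; (2) the map equal to g on B(x,r) and to the identity on 𝕌 ∖ B(x,r) is a K-bilipschitz bijection of 𝕌; (3) g is N-bigood. -/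
open Metric Set
open scoped Classical

/-- The Urysohn space: a complete separable metric space which is universal for
separable metric spaces and finitely ultrahomogeneous. -/
def IsUrysohn (U : Type) [MetricSpace U] : Prop :=
  CompleteSpace U ∧ TopologicalSpace.SeparableSpace U ∧
  (∀ (Y : Type) [MetricSpace Y] [TopologicalSpace.SeparableSpace Y],
      ∃ f : Y → U, Isometry f) ∧
  (∀ (A : Set U) (f : U → U), A.Finite →
      (∀ u ∈ A, ∀ v ∈ A, dist (f u) (f v) = dist u v) →
      ∃ g : U ≃ᵢ U, ∀ u ∈ A, g u = f u)

/-- `f` is `K`-bilipschitz on the set `A`. -/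
def BilipschitzOn {U : Type} [MetricSpace U] (K : ℝ) (f : U → U) (A : Set U) : Prop :=
  ∀ u ∈ A, ∀ v ∈ A,
    (1 / K) * dist u v ≤ dist (f u) (f v) ∧ dist (f u) (f v) ≤ K * dist u v

/-- `f` is `N`-good on `A` with respect to the ball `B(x,r)`. -/
def NGoodOn {U : Type} [MetricSpace U] (N : ℝ) (x : U) (r : ℝ) (f : U → U) (A : Set U) : Prop :=
  ∀ y ∈ A, dist y (f y) ≤ (1 / N) * (r - dist y x)

/-- `f` is `N`-bigood on `A` with respect to the ball `B(x,r)`: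
both `f` and its inverse are `N`-good. -/
def NBigoodOn {U : Type} [MetricSpace U] (N : ℝ) (x : U) (r : ℝ) (f : U → U) (A : Set U) : Prop :=
  NGoodOn N x r f A ∧ ∀ y ∈ A, dist (f y) y ≤ (1 / N) * (r - dist (f y) x)

/-- Realization of Katetov functions over finite subsets of the Urysohn space. -/
lemma urysohn_realize_finite {U : Type} [MetricSpace U] (hU : IsUrysohn U)
    (F : Set U) (hF : F.Finite) (hne : F.Nonempty) (h : U → ℝ)
    (hlip : ∀ p ∈ F, ∀ q ∈ F, h p ≤ h q + dist p q)
    (hsum : ∀ p ∈ F, ∀ q ∈ F, dist p q ≤ h p + h q) :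
    ∃ w : U, ∀ p ∈ F, dist w p = h p := by
  have hnn : ∀ p ∈ F, 0 ≤ h p := by
    intro p hp
    have := hsum p hp p hp
    simp only [dist_self] at this
    linarith
  by_cases hz : ∃ p ∈ F, h p = 0
  · obtain ⟨p, hp, hp0⟩ := hz
    refine ⟨p, fun q hq => ?_⟩
    have l1 := hlip q hq p hp
    have l2 := hsum p hp q hq
    rw [hp0] at l1 l2
    have := dist_comm p q
    linarith
  · push_neg at hz
    have hpos : ∀ p ∈ F, 0 < h p := fun p hp =>
      lt_of_le_of_ne (hnn p hp) (Ne.symm (hz p hp))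
    haveI : Finite F := hF.to_subtype
    -- the abstract one-point extension
    set X := {p : U // p ∈ F}
    let D : Option X → Option X → ℝ := fun a b =>
      match a, b with
      | some p, some q => dist p.1 q.1
      | some p, none => h p.1
      | none, some q => h q.1
      | none, none => 0
    letI M : MetricSpace (Option X) :=
      { dist := D
        dist_self := by rintro (⟨p, hp⟩ | _) <;> simp [D, dist_self]
        dist_comm := by
          rintro (⟨p, hp⟩ | _) (⟨q, hq⟩ | _) <;> simp [D, dist_comm]
        dist_triangle := by
          rintro (_ | ⟨p, hp⟩) (_ | ⟨q, hq⟩) (_ | ⟨s, hs⟩) <;> simp only [D]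
          · linarith
          · linarith [hnn s hs]
          · linarith [hnn q hq]
          · have := hlip s hs q hq
            have h2 := dist_comm (α := U) q s
            linarith
          · linarith [hnn p hp]
          · exact hsum p hp s hs
          · have := hlip p hp q hq
            have h2 := dist_comm (α := U) p q
            linarith
          · exact dist_triangle _ _ _
        eq_of_dist_eq_zero := by
          rintro (_ | ⟨p, hp⟩) (_ | ⟨q, hq⟩) hd <;> simp only [D] at hd
          · rfl
          · exact absurd hd (hz q hq)
          · exact absurd hd (hz p hp)
          · exact congrArg some (Subtype.ext (eq_of_dist_eq_zero hd)) }
    haveI : TopologicalSpace.SeparableSpace (Option X) := by infer_instance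
    obtain ⟨φ, hφ⟩ := hU.2.2.1 (Option X)
    have hφi : Function.Injective φ := hφ.injective
    set A : Set U := Set.range (fun p : X => φ (some p)) with hA
    have hAfin : A.Finite := Set.finite_range _
    let ψ : U → U := fun v => if hv : ∃ p : X, φ (some p) = v then (hv.choose).1 else v
    have hψ : ∀ p : X, ψ (φ (some p)) = p.1 := by
      intro p
      have hv : ∃ q : X, φ (some q) = φ (some p) := ⟨p, rfl⟩
      have := hv.choose_spec
      have : hv.choose = p := by
        have := hφi this
        exact Option.some_injective _ this
      simp only [ψ, dif_pos hv, this]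
    have hpres : ∀ u ∈ A, ∀ v ∈ A, dist (ψ u) (ψ v) = dist u v := by
      rintro u ⟨p, rfl⟩ v ⟨q, rfl⟩
      rw [hψ p, hψ q, hφ.dist_eq]
      rfl
    obtain ⟨g, hg⟩ := hU.2.2.2 A ψ hAfin hpres
    refine ⟨g (φ none), fun p hp => ?_⟩
    have h1 : g (φ (some ⟨p, hp⟩)) = p := by
      rw [hg _ ⟨⟨p, hp⟩, rfl⟩, hψ]
    calc dist (g (φ none)) p = dist (g (φ none)) (g (φ (some ⟨p, hp⟩))) := by rw [h1]
      _ = dist (φ none) (φ (some ⟨p, hp⟩)) := g.dist_eq _ _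
      _ = h p := hφ.dist_eq _ _

/-- Realization of Katetov functions over totally bounded subsets of the Urysohn space. -/
lemma urysohn_realize_tb {U : Type} [MetricSpace U] (hU : IsUrysohn U)
    (T : Set U) (hT : TotallyBounded T) (hne : T.Nonempty) (h : U → ℝ)
    (hlip : ∀ p ∈ T, ∀ q ∈ T, h p ≤ h q + dist p q)
    (hsum : ∀ p ∈ T, ∀ q ∈ T, dist p q ≤ h p + h q) :
    ∃ w : U, ∀ p ∈ T, dist w p = h p := by
  haveI : CompleteSpace U := hU.1
  obtain ⟨t0, ht0⟩ := hne
  have hnetex : ∀ n : ℕ, ∃ t : Set U, t ⊆ T ∧ t.Finite ∧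
      ∀ p ∈ T, ∃ y ∈ t, dist p y < (1/2)^n := by
    intro n
    obtain ⟨t, hts, htf, hcov⟩ :=
      hT.exists_subset (dist_mem_uniformity (show (0:ℝ) < (1/2)^n by positivity))
    refine ⟨t, hts, htf, fun p hp => ?_⟩
    obtain ⟨y, hy, hxy⟩ := Set.mem_iUnion₂.1 (hcov hp)
    exact ⟨y, hy, hxy⟩
  choose net hnetsub hnetfin hnetcov using hnetex
  set S : ℕ → Set U := fun n => insert t0 (⋃ k ∈ Finset.range (n+1), net k) with hS
  have hSfin : ∀ n, (S n).Finite := by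
    intro n
    exact Set.Finite.insert t0 <| Set.Finite.biUnion (Finset.range (n+1)).finite_toSet
      (fun k _ => hnetfin k)
  have hSsub : ∀ n, S n ⊆ T := by
    intro n y hy
    rcases hy with rfl | hy
    · exact ht0
    · obtain ⟨k, _, hk⟩ := Set.mem_iUnion₂.1 hy
      exact hnetsub k hk
  have hSne : ∀ n, (S n).Nonempty := fun n => ⟨t0, Set.mem_insert _ _⟩
  have hScov : ∀ n, ∀ p ∈ T, ∃ y ∈ S n, dist p y < (1/2)^n := by
    intro n p hp
    obtain ⟨y, hy, hxy⟩ := hnetcov n p hp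
    exact ⟨y, Set.mem_insert_iff.2 (Or.inr (Set.mem_biUnion (Finset.self_mem_range_succ n) hy)),
      hxy⟩
  have hTnn : ∀ p ∈ T, 0 ≤ h p := by
    intro p hp
    have := hsum p hp p hp
    simp only [dist_self] at this
    linarith
  -- the inductive step
  have step : ∀ (n : ℕ) (w : U), (∀ p ∈ S n, dist w p = h p) →
      ∃ w' : U, (∀ p ∈ S (n+1), dist w' p = h p) ∧ dist w w' ≤ 2 * (1/2)^n := by
    intro n w hw
    set E : Set ℝ := (fun p => |h p - dist p w|) '' S (n+1) with hE
    have hEne : E.Nonempty := (hSne (n+1)).image _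
    have hEbdd : BddAbove E := by
      refine ⟨h t0 + dist t0 w, ?_⟩
      rintro v ⟨p, hp, rfl⟩
      have hpT := hSsub (n+1) hp
      rw [abs_le']
      constructor
      · have := hlip p hpT t0 ht0
        have htri := dist_triangle p w t0
        have h2 := dist_comm w t0
        linarith
      · have := hsum p hpT t0 ht0
        have htri := dist_triangle p t0 w
        linarith
    set γ := sSup E with hγ
    have hγ_le : ∀ q ∈ T, γ ≤ h q + dist w q := by
      intro q hq
      refine csSup_le hEne ?_
      rintro v ⟨p, hp, rfl⟩
      have hpT := hSsub (n+1) hp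
      rw [abs_le']
      constructor
      · have := hlip p hpT q hq
        have htri := dist_triangle p w q
        linarith
      · have := hsum p hpT q hq
        have htri := dist_triangle p q w
        have h4 := dist_comm w q
        linarith
    have hγ_ge : ∀ p ∈ S (n+1), |h p - dist p w| ≤ γ :=
      fun p hp => le_csSup hEbdd ⟨p, hp, rfl⟩
    have hγ_nn : 0 ≤ γ := le_trans (abs_nonneg _) (hγ_ge t0 (Set.mem_insert _ _))
    have hγ_small : γ ≤ 2 * (1/2)^n := by
      refine csSup_le hEne ?_
      rintro v ⟨p, hp, rfl⟩
      have hpT := hSsub (n+1) hp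
      obtain ⟨y, hy, hydist⟩ := hScov n p hpT
      have hyT := hSsub n hy
      have e1 : |h p - h y| ≤ dist p y := by
        rw [abs_le]
        have := hlip p hpT y hyT
        have h2 := hlip y hyT p hpT
        have h3 := dist_comm p y
        constructor <;> linarith
      have e2 : h y = dist y w := (hw y hy).symm ▸ (dist_comm w y) ▸ rfl
      have e3 : |dist y w - dist p w| ≤ dist p y := by
        have := abs_dist_sub_le y p w
        have h3 := dist_comm p y
        rwa [h3]
      calc |h p - dist p w| ≤ |h p - h y| + |h y - dist p w| := abs_sub_le _ _ _
        _ ≤ dist p y + (|h y - dist y w| + |dist y w - dist p w|) := by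
            have := abs_sub_le (h y) (dist y w) (dist p w)
            linarith [e1]
        _ ≤ dist p y + (0 + dist p y) := by
            rw [e2]
            simp only [sub_self, abs_zero]
            linarith [e3]
        _ ≤ 2 * (1/2)^n := by linarith
    set h' : U → ℝ := fun p => if p = w then γ else h p with hh'
    have hlip' : ∀ p ∈ insert w (S (n+1)), ∀ q ∈ insert w (S (n+1)), h' p ≤ h' q + dist p q := by
      intro p hp q hq
      by_cases hpw : p = w <;> by_cases hqw : q = w
      · simp only [hh', if_pos hpw, if_pos hqw]
        rw [hpw, hqw]
        simp [dist_self]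
      · have hq' : q ∈ S (n+1) := hq.resolve_left hqw
        have hqT := hSsub (n+1) hq'
        simp only [hh', if_pos hpw, if_neg hqw]
        rw [hpw]
        exact hγ_le q hqT
      · have hp' : p ∈ S (n+1) := hp.resolve_left hpw
        simp only [hh', if_neg hpw, if_pos hqw]
        rw [hqw]
        have := hγ_ge p hp'
        rw [abs_le] at this
        linarith [this.2]
      · have hp' : p ∈ S (n+1) := hp.resolve_left hpw
        have hq' : q ∈ S (n+1) := hq.resolve_left hqw
        simp only [hh', if_neg hpw, if_neg hqw]
        exact hlip p (hSsub _ hp') q (hSsub _ hq')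
    have hsum' : ∀ p ∈ insert w (S (n+1)), ∀ q ∈ insert w (S (n+1)), dist p q ≤ h' p + h' q := by
      intro p hp q hq
      by_cases hpw : p = w <;> by_cases hqw : q = w
      · simp only [hh', if_pos hpw, if_pos hqw]
        rw [hpw, hqw]
        simp [dist_self]
        linarith
      · have hq' : q ∈ S (n+1) := hq.resolve_left hqw
        simp only [hh', if_pos hpw, if_neg hqw]
        rw [hpw]
        have := hγ_ge q hq'
        rw [abs_le] at this
        have h2 := dist_comm w q
        linarith [this.2]
      · have hp' : p ∈ S (n+1) := hp.resolve_left hpw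
        simp only [hh', if_neg hpw, if_pos hqw]
        rw [hqw]
        have := hγ_ge p hp'
        rw [abs_le] at this
        linarith [this.2]
      · have hp' : p ∈ S (n+1) := hp.resolve_left hpw
        have hq' : q ∈ S (n+1) := hq.resolve_left hqw
        simp only [hh', if_neg hpw, if_neg hqw]
        exact hsum p (hSsub _ hp') q (hSsub _ hq')
    obtain ⟨w', hw'⟩ := urysohn_realize_finite hU (insert w (S (n+1)))
      ((hSfin (n+1)).insert w) ⟨w, Set.mem_insert _ _⟩ h' hlip' hsum'
    have hw'w : dist w' w = γ := by
      have := hw' w (Set.mem_insert _ _)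
      simpa only [hh', if_pos rfl] using this
    refine ⟨w', ?_, ?_⟩
    · intro p hp
      by_cases hpw : p = w
      · rw [hpw] at hp ⊢
        rw [hw'w]
        have hwT := hSsub (n+1) hp
        have hub : γ ≤ h w := by
          have := hγ_le w hwT
          simpa [dist_self] using this
        have hlb : h w ≤ γ := by
          have := hγ_ge w hp
          rw [abs_le] at this
          have h1 := this.2
          simp only [dist_self] at h1
          linarith
        linarith
      · have := hw' p (Set.mem_insert_iff.2 (Or.inr hp))
        simpa only [hh', if_neg hpw] using this
    · rw [dist_comm, hw'w]
      exact hγ_small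
  -- build the Cauchy sequence
  obtain ⟨w0, hw0⟩ := urysohn_realize_finite hU (S 0) (hSfin 0) (hSne 0) h
    (fun p hp q hq => hlip p (hSsub 0 hp) q (hSsub 0 hq))
    (fun p hp q hq => hsum p (hSsub 0 hp) q (hSsub 0 hq))
  let step' : U → ℕ → U := fun w n =>
    if hw : ∀ p ∈ S n, dist w p = h p then (step n w hw).choose else w
  let ws : ℕ → U := fun n => Nat.rec w0 (fun k ih => step' ih k) n
  have hwsrec : ∀ n, ws (n+1) = step' (ws n) n := fun n => rfl
  have hwsgood : ∀ n, ∀ p ∈ S n, dist (ws n) p = h p := by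
    intro n
    induction n with
    | zero => exact hw0
    | succ k ih =>
      rw [hwsrec k]
      simp only [step', dif_pos ih]
      exact (step k (ws k) ih).choose_spec.1
  have hwsdist : ∀ n, dist (ws n) (ws (n+1)) ≤ 2 * (1/2)^n := by
    intro n
    rw [hwsrec n]
    simp only [step', dif_pos (hwsgood n)]
    exact (step n (ws n) (hwsgood n)).choose_spec.2
  have hcauchy : CauchySeq ws := cauchySeq_of_le_geometric (1/2) 2 (by norm_num) hwsdist
  obtain ⟨w, hwlim⟩ := cauchySeq_tendsto_of_complete hcauchy
  refine ⟨w, fun p hp => ?_⟩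
  have key : ∀ n, |dist (ws n) p - h p| ≤ 2 * (1/2)^n := by
    intro n
    obtain ⟨y, hy, hydist⟩ := hScov n p hp
    have hyT := hSsub n hy
    have e1 : |h y - h p| ≤ dist p y := by
      rw [abs_le]
      have := hlip p hp y hyT
      have h2 := hlip y hyT p hp
      have h3 := dist_comm p y
      constructor <;> linarith
    have e2 : dist (ws n) y = h y := hwsgood n y hy
    have e3 : |dist (ws n) p - dist (ws n) y| ≤ dist p y := by
      have := abs_dist_sub_le p y (ws n)
      have h3 := dist_comm (ws n) p
      have h4 := dist_comm (ws n) y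
      rwa [← h3, ← h4] at this
    calc |dist (ws n) p - h p|
        ≤ |dist (ws n) p - dist (ws n) y| + |dist (ws n) y - h p| := abs_sub_le _ _ _
      _ ≤ dist p y + (|dist (ws n) y - h y| + |h y - h p|) := by
          have := abs_sub_le (dist (ws n) y) (h y) (h p)
          linarith [e3]
      _ ≤ dist p y + (0 + dist p y) := by
          rw [e2]
          simp only [sub_self, abs_zero]
          linarith [e1]
      _ ≤ 2 * (1/2)^n := by linarith
  have hlim1 : Filter.Tendsto (fun n => dist (ws n) p) Filter.atTop (nhds (dist w p)) :=
    hwlim.dist tendsto_const_nhds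
  have hlim2 : Filter.Tendsto (fun n => dist (ws n) p) Filter.atTop (nhds (h p)) := by
    have hz : Filter.Tendsto (fun n : ℕ => dist (ws n) p - h p) Filter.atTop (nhds 0) := by
      apply squeeze_zero_norm (fun n => key n)
      have : Filter.Tendsto (fun n : ℕ => (1/2 : ℝ)^n) Filter.atTop (nhds 0) :=
        tendsto_pow_atTop_nhds_zero_of_lt_one (by norm_num) (by norm_num)
      have := this.const_mul (2 : ℝ)
      simpa using this
    have h2 : Filter.Tendsto (fun n : ℕ => (dist (ws n) p - h p) + h p) Filter.atTop
        (nhds (0 + h p)) := hz.add tendsto_const_nhds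
    simpa using h2
  exact tendsto_nhds_unique hlim1 hlim2

/-- The invariant maintained during the back-and-forth construction: a set of pairs
(graph of a partial map) inside the closed ball which is `K`-bilipschitz and `N`-bigood. -/
def UryGraph (U : Type) [MetricSpace U] (x : U) (r N K : ℝ) (G : Set (U × U)) : Prop :=
  (x, x) ∈ G ∧
  (∀ p ∈ G, dist p.1 x ≤ r ∧ dist p.1 p.2 ≤ (1/N) * (r - dist p.1 x) ∧
    dist p.1 p.2 ≤ (1/N) * (r - dist p.2 x)) ∧
  (∀ p ∈ G, ∀ q ∈ G, (1/K) * dist p.1 q.1 ≤ dist p.2 q.2 ∧ dist p.2 q.2 ≤ K * dist p.1 q.1)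

lemma UryGraph.snd_ball {U : Type} [MetricSpace U] {x : U} {r N K : ℝ} {G : Set (U × U)}
    (hN : 0 < N) (hG : UryGraph U x r N K G) : ∀ p ∈ G, dist p.2 x ≤ r := by
  intro p hp
  have h2 := (hG.2.1 p hp).2.2
  have h3 : (0:ℝ) ≤ (1/N) * (r - dist p.2 x) := le_trans dist_nonneg h2
  have h4 : (0:ℝ) < 1/N := by positivity
  nlinarith

lemma UryGraph.swap {U : Type} [MetricSpace U] {x : U} {r N K : ℝ} {G : Set (U × U)}
    (hN : 0 < N) (hK : 1 ≤ K) (hG : UryGraph U x r N K G) :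
    UryGraph U x r N K (Prod.swap '' G) := by
  have hK0 : (0:ℝ) < K := by linarith
  have inv : ∀ a b : ℝ, (1/K) * a ≤ b → a ≤ K * b := by
    intro a b hab
    have h1 := mul_le_mul_of_nonneg_left hab hK0.le
    calc a = K * ((1/K)*a) := by field_simp
    _ ≤ K * b := h1
  have fwd : ∀ a b : ℝ, a ≤ K * b → (1/K) * a ≤ b := by
    intro a b hab
    have h1 := mul_le_mul_of_nonneg_left hab (by positivity : (0:ℝ) ≤ 1/K)
    calc (1/K)*a ≤ (1/K)*(K*b) := h1
    _ = b := by field_simp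
  refine ⟨⟨(x,x), hG.1, rfl⟩, ?_, ?_⟩
  · rintro p ⟨q, hq, rfl⟩
    have hg := hG.2.1 q hq
    refine ⟨hG.snd_ball hN q hq, ?_, ?_⟩
    · simpa [dist_comm] using hg.2.2
    · simpa [dist_comm] using hg.2.1
  · rintro p ⟨q, hq, rfl⟩ p' ⟨q', hq', rfl⟩
    have hb := hG.2.2 q hq q' hq'
    simp only [Prod.fst_swap, Prod.snd_swap]
    exact ⟨fwd _ _ hb.2, inv _ _ hb.1⟩

lemma UryGraph.snd_tb {U : Type} [MetricSpace U] {x : U} {r N K : ℝ} {G : Set (U × U)}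
    (hK : 1 ≤ K) (hG : UryGraph U x r N K G)
    (htb : TotallyBounded (Prod.fst '' G)) : TotallyBounded (Prod.snd '' G) := by
  have hK0 : (0:ℝ) < K := by linarith
  rw [Metric.totallyBounded_iff]
  intro ε hε
  obtain ⟨t, hts, htf, hcov⟩ :=
    htb.exists_subset (dist_mem_uniformity (show (0:ℝ) < ε/K by positivity))
  classical
  set pick : U → U × U := fun y => if hy : ∃ q ∈ G, q.1 = y then hy.choose else (x,x) with hpick
  have hpickspec : ∀ y, (∃ q ∈ G, q.1 = y) → pick y ∈ G ∧ (pick y).1 = y := by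
    intro y hy
    simp only [hpick, dif_pos hy]
    exact hy.choose_spec
  refine ⟨(fun y => (pick y).2) '' t, htf.image _, ?_⟩
  rintro b ⟨q, hq, rfl⟩
  have hmem : q.1 ∈ Prod.fst '' G := ⟨q, hq, rfl⟩
  obtain ⟨y, hy, hxy⟩ := Set.mem_iUnion₂.1 (hcov hmem)
  have hxy' : dist q.1 y < ε / K := hxy
  have hyim : ∃ q' ∈ G, q'.1 = y := by
    obtain ⟨q', hq', hq'y⟩ := hts hy
    exact ⟨q', hq', hq'y⟩
  obtain ⟨hpG, hpy⟩ := hpickspec y hyim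
  rw [Set.mem_iUnion₂]
  refine ⟨(pick y).2, ⟨y, hy, rfl⟩, ?_⟩
  rw [Metric.mem_ball]
  have hb := (hG.2.2 q hq (pick y) hpG).2
  rw [hpy] at hb
  have : K * dist q.1 y < K * (ε/K) := (mul_lt_mul_iff_right₀ hK0).2 hxy'
  have hKe : K * (ε/K) = ε := by field_simp
  calc dist q.2 (pick y).2 ≤ K * dist q.1 y := hb
  _ < ε := by rw [← hKe]; exact this

set_option maxHeartbeats 1000000 in
/-- One-point extension of a good graph over a totally bounded set. -/
lemma ury_extend_one {U : Type} [MetricSpace U] (hU : IsUrysohn U) (x : U) (r N K : ℝ)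
    (hN : 4 ≤ N) (hK : 1 ≤ K) (hq : K*K - N*K + N ≤ 0)
    (G : Set (U×U)) (hG : UryGraph U x r N K G) (htb : TotallyBounded (Prod.fst '' G))
    (z : U) (hz : dist z x ≤ r) :
    ∃ w : U, UryGraph U x r N K (insert (z, w) G) := by
  classical
  have hN0 : (0:ℝ) < N := by linarith
  have hK0 : (0:ℝ) < K := by linarith
  have hNK1 : N + 1 ≤ N*K := by nlinarith
  have hNK2 : N ≤ (N-1)*K := by nlinarith
  have goods := hG.2.1
  have bilips := hG.2.2
  have hGx : (x,x) ∈ G := hG.1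
  have hdivN : ∀ s t : ℝ, s ≤ (1/N)*t → N*s ≤ t := by
    intro s t hst
    have h1 := mul_le_mul_of_nonneg_left hst hN0.le
    calc N*s ≤ N*((1/N)*t) := h1
    _ = t := by field_simp
  have hNdiv : ∀ s t : ℝ, N*s ≤ t → s ≤ (1/N)*t := by
    intro s t hst
    have h1 := mul_le_mul_of_nonneg_left hst (by positivity : (0:ℝ) ≤ 1/N)
    calc s = (1/N)*(N*s) := by field_simp
    _ ≤ (1/N)*t := h1
  set ε := (1/N) * (r - dist z x) with hεdef
  have hε0 : 0 ≤ ε := by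
    have : 0 ≤ r - dist z x := by linarith
    positivity
  set E : Set ℝ := insert 0 ((fun p : U×U => dist z p.2 - K * dist z p.1) '' G ∪
    (fun p : U×U => (1/K) * dist z p.1 - dist z p.2) '' G) with hE
  have hEne : E.Nonempty := ⟨0, Set.mem_insert _ _⟩
  have hbound : ∀ v ∈ E, v ≤ ε := by
    rintro v hv
    rcases hv with rfl | hv
    · exact hε0
    rcases hv with ⟨p, hp, rfl⟩ | ⟨p, hp, rfl⟩ <;> (try dsimp only)
    · have g1 := hdivN _ _ (goods p hp).2.1
      have t1 := dist_triangle z p.1 p.2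
      have t2 := dist_triangle z p.1 x
      have hd0 : (0:ℝ) ≤ dist z p.1 := dist_nonneg
      rw [hεdef]
      apply hNdiv
      have m2 := mul_nonneg (show (0:ℝ) ≤ N*K - N - 1 by linarith) hd0
      have m3 := mul_le_mul_of_nonneg_left t1 hN0.le
      linarith [m2, m3, g1, t2]
    · have g1 := hdivN _ _ (goods p hp).2.1
      have t1 : dist z p.1 ≤ dist z p.2 + dist p.1 p.2 := by
        have := dist_triangle z p.2 p.1
        have h2 := dist_comm p.2 p.1
        linarith
      have t2 := dist_triangle z p.1 x
      have hd0 : (0:ℝ) ≤ dist z p.1 := dist_nonneg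
      rw [hεdef]
      apply hNdiv
      have m1 := mul_le_mul_of_nonneg_left t1 hN0.le
      have key : N * ((1/K) * dist z p.1) ≤ (N-1) * dist z p.1 := by
        have hc : K * (N * ((1/K) * dist z p.1) - (N-1) * dist z p.1)
            = (N - (N-1)*K) * dist z p.1 := by field_simp
        have hc2 : (N - (N-1)*K) * dist z p.1 ≤ 0 :=
          mul_nonpos_of_nonpos_of_nonneg (by linarith) hd0
        nlinarith [hc, hc2, hK0]
      linarith [m1, g1, t2, key]
  have hEbdd : BddAbove E := ⟨ε, fun v hv => hbound v hv⟩
  set δ := sSup E with hδdef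
  have hδε : δ ≤ ε := csSup_le hEne hbound
  have hδ0 : 0 ≤ δ := le_csSup hEbdd (Set.mem_insert _ _)
  have hδ1 : ∀ p ∈ G, dist z p.2 ≤ K * dist z p.1 + δ := by
    intro p hp
    have := le_csSup hEbdd (Set.mem_insert_iff.2 (Or.inr (Or.inl ⟨p, hp, rfl⟩)))
    rw [← hδdef] at this
    dsimp only at this
    linarith
  have hδ2 : ∀ p ∈ G, (1/K) * dist z p.1 ≤ dist z p.2 + δ := by
    intro p hp
    have := le_csSup hEbdd (Set.mem_insert_iff.2 (Or.inr (Or.inr ⟨p, hp, rfl⟩)))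
    rw [← hδdef] at this
    dsimp only at this
    linarith
  set h : U → ℝ := fun u => sInf (insert (δ + dist u z)
    ((fun p : U×U => K * dist z p.1 + dist u p.2) '' G)) with hh
  have hune : ∀ u : U, (insert (δ + dist u z)
      ((fun p : U×U => K * dist z p.1 + dist u p.2) '' G)).Nonempty :=
    fun u => ⟨_, Set.mem_insert _ _⟩
  have hubdd : ∀ u : U, BddBelow (insert (δ + dist u z)
      ((fun p : U×U => K * dist z p.1 + dist u p.2) '' G)) := by
    intro u
    refine ⟨0, ?_⟩
    rintro v (rfl | ⟨p, hp, rfl⟩) <;> (try dsimp only)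
    · have : (0:ℝ) ≤ dist u z := dist_nonneg
      linarith
    · have h1 := mul_nonneg hK0.le (dist_nonneg (x := z) (y := p.1))
      have h2 : (0:ℝ) ≤ dist u p.2 := dist_nonneg
      linarith
  have h_le_z : ∀ u : U, h u ≤ δ + dist u z :=
    fun u => csInf_le (hubdd u) (Set.mem_insert _ _)
  have h_le_p : ∀ u : U, ∀ p ∈ G, h u ≤ K * dist z p.1 + dist u p.2 :=
    fun u p hp => csInf_le (hubdd u) (Set.mem_insert_iff.2 (Or.inr ⟨p, hp, rfl⟩))
  have h_nn : ∀ u : U, 0 ≤ h u := by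
    intro u
    refine le_csInf (hune u) ?_
    rintro v (rfl | ⟨p, hp, rfl⟩) <;> (try dsimp only)
    · have : (0:ℝ) ≤ dist u z := dist_nonneg
      linarith
    · have h1 := mul_nonneg hK0.le (dist_nonneg (x := z) (y := p.1))
      have h2 : (0:ℝ) ≤ dist u p.2 := dist_nonneg
      linarith
  have h_lip : ∀ u v : U, h u ≤ h v + dist u v := by
    intro u v
    have : h u - dist u v ≤ h v := by
      refine le_csInf (hune v) ?_
      rintro e (rfl | ⟨p, hp, rfl⟩) <;> (try dsimp only)
      · have := h_le_z u
        have htri := dist_triangle u v z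
        linarith
      · have := h_le_p u p hp
        have htri := dist_triangle u v p.2
        linarith
    linarith
  have h_sum : ∀ u v : U, dist u v ≤ h u + h v := by
    intro u v
    have main : dist u v - h v ≤ h u := by
      refine le_csInf (hune u) ?_
      rintro e (rfl | ⟨p, hp, rfl⟩) <;> (try dsimp only)
      · have inner : dist u v - (δ + dist u z) ≤ h v := by
          refine le_csInf (hune v) ?_
          rintro e' (rfl | ⟨p', hp', rfl⟩) <;> (try dsimp only)
          · have t1 := dist_triangle u z v
            have h2 : dist z v = dist v z := dist_comm _ _
            linarith
          · have t1 := dist_triangle u z v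
            have t2 := dist_triangle z p'.2 v
            have h2 : dist p'.2 v = dist v p'.2 := dist_comm _ _
            have := hδ1 p' hp'
            linarith
        linarith
      · have inner : dist u v - (K * dist z p.1 + dist u p.2) ≤ h v := by
          refine le_csInf (hune v) ?_
          rintro e' (rfl | ⟨p', hp', rfl⟩) <;> (try dsimp only)
          · have t1 := dist_triangle u p.2 v
            have t2 := dist_triangle p.2 z v
            have h2 : dist z v = dist v z := dist_comm _ _
            have h3 : dist p.2 z = dist z p.2 := dist_comm _ _
            have := hδ1 p hp
            linarith
          · have t1 := dist_triangle u p.2 v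
            have t2 := dist_triangle p.2 p'.2 v
            have h2 : dist p'.2 v = dist v p'.2 := dist_comm _ _
            have hb := (bilips p hp p' hp').2
            have t3 := dist_triangle p.1 z p'.1
            have h4 : dist p.1 z = dist z p.1 := dist_comm _ _
            have m1 := mul_le_mul_of_nonneg_left t3 hK0.le
            have hexp : K * (dist p.1 z + dist z p'.1)
                = K * dist p.1 z + K * dist z p'.1 := by ring
            rw [hexp, h4] at m1
            linarith
        linarith
    linarith [main]
  have h_low : ∀ p ∈ G, (1/K) * dist z p.1 ≤ h p.2 := by
    intro p hp
    refine le_csInf (hune p.2) ?_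
    rintro e (rfl | ⟨q, hq, rfl⟩) <;> (try dsimp only)
    · have := hδ2 p hp
      have h2 : dist p.2 z = dist z p.2 := dist_comm _ _
      linarith
    · have hb := (bilips q hq p hp).1
      have t1 := dist_triangle z q.1 p.1
      have m1 := mul_le_mul_of_nonneg_left t1 (by positivity : (0:ℝ) ≤ 1/K)
      have h1k : (1/K) * dist z q.1 ≤ K * dist z q.1 := by
        apply mul_le_mul_of_nonneg_right _ dist_nonneg
        calc (1/K) ≤ 1 := by rw [div_le_one hK0]; exact hK
        _ ≤ K := hK
      have h2 : dist q.2 p.2 = dist p.2 q.2 := dist_comm _ _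
      have hm : (1/K) * (dist z q.1 + dist q.1 p.1)
          = (1/K) * dist z q.1 + (1/K) * dist q.1 p.1 := by ring
      rw [hm] at m1
      linarith
  have hTtb : TotallyBounded (insert z (Prod.snd '' G)) := by
    rw [Set.insert_eq]
    exact (totallyBounded_singleton z).union (hG.snd_tb hK htb)
  obtain ⟨w, hw⟩ := urysohn_realize_tb hU (insert z (Prod.snd '' G)) hTtb
    ⟨z, Set.mem_insert _ _⟩ h
    (fun p _ q _ => h_lip p q) (fun p _ q _ => h_sum p q)
  have hwz : dist w z = h z := hw z (Set.mem_insert _ _)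
  have hwp : ∀ p ∈ G, dist w p.2 = h p.2 :=
    fun p hp => hw p.2 (Set.mem_insert_iff.2 (Or.inr ⟨p, hp, rfl⟩))
  have hwx : dist w x = h x := hwp (x,x) hGx
  have hzval : h z ≤ δ := by
    have := h_le_z z
    simpa [dist_self] using this
  have key : N * h z + h x ≤ r := by
    refine le_of_forall_pos_le_add ?_
    intro η hη
    set η' := η / (N+1) with hη'
    have hη'0 : 0 < η' := by positivity
    have hη'η : (N+1) * η' ≤ η := by
      rw [hη', mul_div_cancel₀]
      linarith
    obtain ⟨e, he, hlt⟩ := exists_lt_of_lt_csSup hEne (show δ - η' < sSup E by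
      rw [← hδdef]; linarith)
    have hδe : δ ≤ e + η' := by linarith
    have h3 := mul_le_mul_of_nonneg_left hzval hN0.le
    rcases he with rfl | he
    · have hxz : h x ≤ δ + dist x z := h_le_z x
      have h2 : dist x z = dist z x := dist_comm _ _
      have h4 := mul_le_mul_of_nonneg_left hδe hN0.le
      have hexp : N * ((0:ℝ) + η') = N * η' := by ring
      rw [hexp] at h4
      linarith
    rcases he with ⟨p, hp, rfl⟩ | ⟨p, hp, rfl⟩ <;> (try dsimp only at hδe)
    · have g2 := hdivN _ _ (goods p hp).2.2
      have t1 := dist_triangle z p.1 p.2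
      have hxp : h x ≤ K * dist z p.1 + dist x p.2 := h_le_p x p hp
      have h2 : dist x p.2 = dist p.2 x := dist_comm _ _
      have hd0 : (0:ℝ) ≤ dist z p.1 := dist_nonneg
      have m2 := mul_nonneg (show (0:ℝ) ≤ (N-1)*K - N by linarith) hd0
      have h4 := mul_le_mul_of_nonneg_left hδe hN0.le
      have m3 := mul_le_mul_of_nonneg_left t1 hN0.le
      have hexp1 : N * (dist z p.2 - K * dist z p.1 + η')
          = N * dist z p.2 - N * (K * dist z p.1) + N * η' := by ring
      have hexp2 : N * (dist z p.1 + dist p.1 p.2)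
          = N * dist z p.1 + N * dist p.1 p.2 := by ring
      rw [hexp1] at h4
      rw [hexp2] at m3
      linarith [m2, h3, h4, m3, g2, hxp, hη'η, hη'0]
    · have g2 := hdivN _ _ (goods p hp).2.2
      have t1 : dist z p.1 ≤ dist z p.2 + dist p.1 p.2 := by
        have := dist_triangle z p.2 p.1
        have h2 := dist_comm p.2 p.1
        linarith
      have hxp : h x ≤ K * dist z p.1 + dist x p.2 := h_le_p x p hp
      have h2 : dist x p.2 = dist p.2 x := dist_comm _ _
      have hd0 : (0:ℝ) ≤ dist z p.1 := dist_nonneg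
      have keyc : N * ((1/K) * dist z p.1) - N * dist z p.1 + K * dist z p.1 ≤ 0 := by
        have hc : K * (N * ((1/K) * dist z p.1) - N * dist z p.1 + K * dist z p.1)
            = (K*K - N*K + N) * dist z p.1 := by field_simp; ring
        have hc2 : (K*K - N*K + N) * dist z p.1 ≤ 0 :=
          mul_nonpos_of_nonpos_of_nonneg hq hd0
        nlinarith [hc, hc2, hK0]
      have h4 := mul_le_mul_of_nonneg_left hδe hN0.le
      have m3 := mul_le_mul_of_nonneg_left t1 hN0.le
      have hexp1 : N * ((1/K) * dist z p.1 - dist z p.2 + η')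
          = N * ((1/K) * dist z p.1) - N * dist z p.2 + N * η' := by ring
      have hexp2 : N * (dist z p.2 + dist p.1 p.2)
          = N * dist z p.2 + N * dist p.1 p.2 := by ring
      rw [hexp1] at h4
      rw [hexp2] at m3
      linarith [keyc, h3, h4, m3, g2, hxp, hη'η, hη'0]
  refine ⟨w, Set.mem_insert_iff.2 (Or.inr hGx), ?_, ?_⟩
  · rintro p (rfl | hp)
    · refine ⟨hz, ?_, ?_⟩
      · have hzw : dist z w = h z := by rw [dist_comm]; exact hwz
        dsimp only
        rw [hzw]
        calc h z ≤ δ := hzval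
        _ ≤ ε := hδε
        _ = (1/N) * (r - dist z x) := hεdef
      · have hzw : dist z w = h z := by rw [dist_comm]; exact hwz
        dsimp only
        rw [hzw, hwx]
        apply hNdiv
        linarith
    · exact goods p hp
  · have newold : ∀ q ∈ G, (1/K) * dist z q.1 ≤ dist w q.2 ∧ dist w q.2 ≤ K * dist z q.1 := by
      intro q hq
      rw [hwp q hq]
      constructor
      · exact h_low q hq
      · have := h_le_p q.2 q hq
        simpa [dist_self] using this
    rintro p (rfl | hp) q (rfl | hq)
    · simp [dist_self]
    · exact newold q hq
    · have := newold p hp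
      constructor
      · rw [dist_comm p.1 z, dist_comm p.2 w]
        exact this.1
      · rw [dist_comm p.1 z, dist_comm p.2 w]
        exact this.2
    · exact bilips p hp q hq

/-- Limit map obtained from a good graph whose first projection is dense in a set. -/
lemma ury_graph_limit {U : Type} [MetricSpace U] (hcomp : CompleteSpace U) {x : U} {r N K : ℝ}
    (hN0 : 0 < N) (hK0 : 0 < K) {G : Set (U × U)} (hG : UryGraph U x r N K G)
    (F : U → U) (hFmem : ∀ y ∈ Prod.fst '' G, (y, F y) ∈ G) :
    ∃ g : U → U,
      (∀ y ∈ Prod.fst '' G, g y = F y) ∧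
      (∀ y ∈ closure (Prod.fst '' G), ∀ y' ∈ closure (Prod.fst '' G),
        (1/K) * dist y y' ≤ dist (g y) (g y') ∧ dist (g y) (g y') ≤ K * dist y y') ∧
      (∀ y ∈ closure (Prod.fst '' G), dist y (g y) ≤ (1/N) * (r - dist y x) ∧
        dist y (g y) ≤ (1/N) * (r - dist (g y) x)) ∧
      (∀ y ∈ closure (Prod.fst '' G), ∃ v : ℕ → U, (∀ n, v n ∈ Prod.fst '' G) ∧
        Filter.Tendsto v Filter.atTop (nhds y) ∧
        Filter.Tendsto (fun n => F (v n)) Filter.atTop (nhds (g y))) := by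
  classical
  set S := Prod.fst '' G with hS
  have hbil : ∀ y ∈ S, ∀ y' ∈ S,
      (1/K) * dist y y' ≤ dist (F y) (F y') ∧ dist (F y) (F y') ≤ K * dist y y' :=
    fun y hy y' hy' => hG.2.2 (y, F y) (hFmem y hy) (y', F y') (hFmem y' hy')
  have hgood : ∀ y ∈ S, dist y (F y) ≤ (1/N) * (r - dist y x) ∧
      dist y (F y) ≤ (1/N) * (r - dist (F y) x) :=
    fun y hy => ⟨(hG.2.1 (y, F y) (hFmem y hy)).2.1, (hG.2.1 (y, F y) (hFmem y hy)).2.2⟩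
  have hglim : ∀ y : U, y ∈ closure S → ∃ ℓ : U, ∃ v : ℕ → U, (∀ n, v n ∈ S) ∧
      Filter.Tendsto v Filter.atTop (nhds y) ∧
      Filter.Tendsto (fun n => F (v n)) Filter.atTop (nhds ℓ) := by
    intro y hy
    obtain ⟨v, hv1, hv2⟩ := mem_closure_iff_seq_limit.1 hy
    have hcau : CauchySeq (fun n => F (v n)) := by
      rw [Metric.cauchySeq_iff]
      intro ε hε
      have hvc : CauchySeq v := hv2.cauchySeq
      rw [Metric.cauchySeq_iff] at hvc
      obtain ⟨Nn, hNn⟩ := hvc (ε / K) (by positivity)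
      refine ⟨Nn, fun m hm n hn => ?_⟩
      calc dist (F (v m)) (F (v n)) ≤ K * dist (v m) (v n) := (hbil _ (hv1 m) _ (hv1 n)).2
      _ < K * (ε / K) := (mul_lt_mul_iff_right₀ hK0).2 (hNn m hm n hn)
      _ = ε := by field_simp
    obtain ⟨ℓ, hℓ⟩ := cauchySeq_tendsto_of_complete hcau
    exact ⟨ℓ, v, hv1, hv2, hℓ⟩
  set g : U → U := fun y => if hy : y ∈ closure S then (hglim y hy).choose else y with hg
  have happrox : ∀ y ∈ closure S, ∃ v : ℕ → U, (∀ n, v n ∈ S) ∧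
      Filter.Tendsto v Filter.atTop (nhds y) ∧
      Filter.Tendsto (fun n => F (v n)) Filter.atTop (nhds (g y)) := by
    intro y hy
    have := (hglim y hy).choose_spec
    simpa only [hg, dif_pos hy] using this
  have hval : ∀ y ∈ S, g y = F y := by
    intro y hy
    obtain ⟨v, hv1, hv2, hv3⟩ := happrox y (subset_closure hy)
    have hFcont : Filter.Tendsto (fun n => F (v n)) Filter.atTop (nhds (F y)) := by
      rw [tendsto_iff_dist_tendsto_zero]
      apply squeeze_zero (fun n => dist_nonneg) (fun n => (hbil _ (hv1 n) _ hy).2)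
      have h0 : Filter.Tendsto (fun n => dist (v n) y) Filter.atTop (nhds 0) :=
        tendsto_iff_dist_tendsto_zero.1 hv2
      have := h0.const_mul K
      simpa using this
    exact tendsto_nhds_unique hv3 hFcont
  refine ⟨g, hval, ?_, ?_, happrox⟩
  · intro y hy y' hy'
    obtain ⟨v, hv1, hv2, hv3⟩ := happrox y hy
    obtain ⟨v', hv'1, hv'2, hv'3⟩ := happrox y' hy'
    have hd1 : Filter.Tendsto (fun n => dist (v n) (v' n)) Filter.atTop (nhds (dist y y')) :=
      hv2.dist hv'2
    have hd2 : Filter.Tendsto (fun n => dist (F (v n)) (F (v' n))) Filter.atTop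
        (nhds (dist (g y) (g y'))) := hv3.dist hv'3
    constructor
    · have hlhs : Filter.Tendsto (fun n => (1/K) * dist (v n) (v' n)) Filter.atTop
          (nhds ((1/K) * dist y y')) := hd1.const_mul _
      exact le_of_tendsto_of_tendsto' hlhs hd2 (fun n => (hbil _ (hv1 n) _ (hv'1 n)).1)
    · have hrhs : Filter.Tendsto (fun n => K * dist (v n) (v' n)) Filter.atTop
          (nhds (K * dist y y')) := hd1.const_mul _
      exact le_of_tendsto_of_tendsto' hd2 hrhs (fun n => (hbil _ (hv1 n) _ (hv'1 n)).2)
  · intro y hy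
    obtain ⟨v, hv1, hv2, hv3⟩ := happrox y hy
    have hd1 : Filter.Tendsto (fun n => dist (v n) (F (v n))) Filter.atTop
        (nhds (dist y (g y))) := hv2.dist hv3
    constructor
    · have hrhs : Filter.Tendsto (fun n => (1/N) * (r - dist (v n) x)) Filter.atTop
          (nhds ((1/N) * (r - dist y x))) := by
        exact ((tendsto_const_nhds.sub (hv2.dist tendsto_const_nhds)).const_mul _)
      exact le_of_tendsto_of_tendsto' hd1 hrhs (fun n => (hgood _ (hv1 n)).1)
    · have hrhs : Filter.Tendsto (fun n => (1/N) * (r - dist (F (v n)) x)) Filter.atTop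
          (nhds ((1/N) * (r - dist (g y) x))) := by
        exact ((tendsto_const_nhds.sub (hv3.dist tendsto_const_nhds)).const_mul _)
      exact le_of_tendsto_of_tendsto' hd1 hrhs (fun n => (hgood _ (hv1 n)).2)

set_option maxHeartbeats 1000000 in
/-- Bilipschitz extension theorem for totally bounded subsets of a ball
in the Urysohn space (Theorem 3.5 of the paper). -/
theorem bilipschitz_extension_totally_bounded (U : Type) [MetricSpace U]
    (hU : IsUrysohn U)
    (x : U) (r : ℝ) (hr : 0 < r) (N K : ℝ) (hN : 4 ≤ N)
    (hK₁ : (N - Real.sqrt (N ^ 2 - 4 * N)) / 2 < K)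
    (hK₂ : K < (N + Real.sqrt (N ^ 2 - 4 * N)) / 2)
    (A : Set U) (hAtb : TotallyBounded A) (hxA : x ∈ A) (hAsub : A ⊆ ball x r)
    (f : U → U) (hmap : MapsTo f A (ball x r))
    (hbil : BilipschitzOn K f A) (hgood : NBigoodOn N x r f A) (hfx : f x = x) :
    ∃ g : U → U,
      BijOn g (ball x r) (ball x r) ∧
      (∀ a ∈ A, g a = f a) ∧
      Function.Bijective (fun z => if z ∈ ball x r then g z else z) ∧
      BilipschitzOn K (fun z => if z ∈ ball x r then g z else z) Set.univ ∧
      NBigoodOn N x r g (ball x r) := by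
  classical
  have hcomp : CompleteSpace U := hU.1
  have hsep : TopologicalSpace.SeparableSpace U := hU.2.1
  have hN0 : (0:ℝ) < N := by linarith
  -- the quadratic condition
  have hsqarg : (0:ℝ) ≤ N^2 - 4*N := by nlinarith
  have hs2 : Real.sqrt (N^2 - 4*N) ^ 2 = N^2 - 4*N := Real.sq_sqrt hsqarg
  have hs0 : 0 ≤ Real.sqrt (N^2 - 4*N) := Real.sqrt_nonneg _
  have hq : K*K - N*K + N ≤ 0 := by nlinarith [hK₁, hK₂, hs2]
  have hK1 : (1:ℝ) ≤ K := by nlinarith [hq, sq_nonneg K]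
  have hK0 : (0:ℝ) < K := by linarith
  have hNK1 : N + 1 ≤ N*K := by nlinarith
  have hNK2 : N ≤ (N-1)*K := by nlinarith
  -- initial graph
  set G0 : Set (U×U) := (fun a => (a, f a)) '' A with hG0def
  have hG0 : UryGraph U x r N K G0 := by
    refine ⟨⟨x, hxA, by simp [hfx]⟩, ?_, ?_⟩
    · rintro p ⟨a, ha, rfl⟩
      dsimp only
      refine ⟨(Metric.mem_ball.1 (hAsub ha)).le, hgood.1 a ha, ?_⟩
      have := hgood.2 a ha
      rwa [dist_comm (f a) a] at this
    · rintro p ⟨a, ha, rfl⟩ q ⟨b, hb, rfl⟩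
      exact hbil a ha b hb
  have hfstG0 : Prod.fst '' G0 = A := by
    rw [hG0def, Set.image_image]
    simp
  have htb0 : TotallyBounded (Prod.fst '' G0) := by rw [hfstG0]; exact hAtb
  -- countable dense sequence in the ball
  obtain ⟨s, hsc, hsd⟩ := TopologicalSpace.exists_countable_dense U
  have hsball : (s ∩ ball x r).Nonempty := by
    obtain ⟨v, hv1, hv2⟩ := hsd.inter_open_nonempty (ball x r) isOpen_ball
      ⟨x, mem_ball_self hr⟩
    exact ⟨v, hv2, hv1⟩
  obtain ⟨u, hu⟩ := (Set.Countable.mono Set.inter_subset_left hsc).exists_eq_range hsball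
  have huball : ∀ n, u n ∈ ball x r := by
    intro n
    have : u n ∈ s ∩ ball x r := by rw [hu]; exact ⟨n, rfl⟩
    exact this.2
  have hzball : ∀ n, dist (u n) x ≤ r := fun n => (Metric.mem_ball.1 (huball n)).le
  have hudense : ∀ y ∈ ball x r, ∀ ε > 0, ∃ n, dist y (u n) < ε := by
    intro y hy ε hε
    have hry : 0 < r - dist y x := by have := Metric.mem_ball.1 hy; linarith
    have hε' : 0 < min ε (r - dist y x) := lt_min hε hry
    obtain ⟨v, hv1, hv2⟩ := hsd.inter_open_nonempty (ball y (min ε (r - dist y x)))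
      isOpen_ball ⟨y, mem_ball_self hε'⟩
    have hvy : dist v y < min ε (r - dist y x) := Metric.mem_ball.1 hv1
    have hvball : v ∈ ball x r := by
      rw [Metric.mem_ball]
      have t1 := dist_triangle v y x
      have := min_le_right ε (r - dist y x)
      linarith
    have : v ∈ s ∩ ball x r := ⟨hv2, hvball⟩
    rw [hu] at this
    obtain ⟨n, rfl⟩ := this
    have hml := min_le_left ε (r - dist y x)
    refine ⟨n, ?_⟩
    have hdc : dist y (u n) = dist (u n) y := dist_comm _ _
    linarith
  -- the back-and-forth step
  have step : ∀ (G : Set (U×U)), UryGraph U x r N K G → TotallyBounded (Prod.fst '' G) →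
      ∀ n : ℕ, ∃ G' : Set (U×U), G ⊆ G' ∧ UryGraph U x r N K G' ∧
        TotallyBounded (Prod.fst '' G') ∧
        (∃ b, (u n, b) ∈ G') ∧ (∃ a, (a, u n) ∈ G') := by
    intro G hG htb n
    obtain ⟨w, hw⟩ := ury_extend_one hU x r N K hN hK1 hq G hG htb (u n) (hzball n)
    set G1 := insert (u n, w) G with hG1def
    have htb1 : TotallyBounded (Prod.fst '' G1) := by
      rw [hG1def, Set.image_insert_eq, Set.insert_eq]
      exact (totallyBounded_singleton _).union htb
    have hG1s : UryGraph U x r N K (Prod.swap '' G1) := hw.swap hN0 hK1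
    have htb1s : TotallyBounded (Prod.fst '' (Prod.swap '' G1)) := by
      have heq : Prod.fst '' (Prod.swap '' G1) = Prod.snd '' G1 := by
        rw [Set.image_image]
        rfl
      rw [heq]
      exact hw.snd_tb hK1 htb1
    obtain ⟨w', hw'⟩ := ury_extend_one hU x r N K hN hK1 hq _ hG1s htb1s (u n) (hzball n)
    have hfinal := hw'.swap hN0 hK1
    have heq2 : Prod.swap '' (insert (u n, w') (Prod.swap '' G1)) = insert (w', u n) G1 := by
      rw [Set.image_insert_eq]
      congr 1
      rw [Set.image_image]
      simp
    rw [heq2] at hfinal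
    refine ⟨insert (w', u n) G1, ?_, hfinal, ?_, ?_, ?_⟩
    · intro p hp
      exact Set.mem_insert_iff.2 (Or.inr (Set.mem_insert_iff.2 (Or.inr hp)))
    · rw [Set.image_insert_eq, Set.insert_eq]
      exact (totallyBounded_singleton _).union htb1
    · exact ⟨w, Set.mem_insert_iff.2 (Or.inr (Set.mem_insert _ _))⟩
    · exact ⟨w', Set.mem_insert _ _⟩
  -- iterate
  let Gs : ℕ → {G : Set (U×U) // UryGraph U x r N K G ∧ TotallyBounded (Prod.fst '' G)} :=
    fun n => Nat.rec ⟨G0, hG0, htb0⟩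
      (fun k ih => ⟨(step ih.1 ih.2.1 ih.2.2 k).choose,
        (step ih.1 ih.2.1 ih.2.2 k).choose_spec.2.1,
        (step ih.1 ih.2.1 ih.2.2 k).choose_spec.2.2.1⟩) n
  have hGsrec : ∀ n, (Gs (n+1)).1 = (step (Gs n).1 (Gs n).2.1 (Gs n).2.2 n).choose :=
    fun n => rfl
  have hGsmono : ∀ n, (Gs n).1 ⊆ (Gs (n+1)).1 := by
    intro n
    rw [hGsrec]
    exact (step (Gs n).1 (Gs n).2.1 (Gs n).2.2 n).choose_spec.1
  have hGsmem1 : ∀ n, ∃ b, (u n, b) ∈ (Gs (n+1)).1 := by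
    intro n
    rw [hGsrec]
    exact (step (Gs n).1 (Gs n).2.1 (Gs n).2.2 n).choose_spec.2.2.2.1
  have hGsmem2 : ∀ n, ∃ a, (a, u n) ∈ (Gs (n+1)).1 := by
    intro n
    rw [hGsrec]
    exact (step (Gs n).1 (Gs n).2.1 (Gs n).2.2 n).choose_spec.2.2.2.2
  have hsub : ∀ m n : ℕ, m ≤ n → (Gs m).1 ⊆ (Gs n).1 := by
    intro m n hmn
    induction n, hmn using Nat.le_induction with
    | base => exact subset_rfl
    | succ n hmn ih => exact ih.trans (hGsmono n)
  set Ginf : Set (U×U) := ⋃ n, (Gs n).1 with hGinfdef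
  have hmemGs : ∀ n, (Gs n).1 ⊆ Ginf := fun n => Set.subset_iUnion (fun n => (Gs n).1) n
  have hGinfgood : UryGraph U x r N K Ginf := by
    refine ⟨hmemGs 0 hG0.1, ?_, ?_⟩
    · intro p hp
      obtain ⟨n, hn⟩ := Set.mem_iUnion.1 hp
      exact (Gs n).2.1.2.1 p hn
    · intro p hp q hq
      obtain ⟨n, hn⟩ := Set.mem_iUnion.1 hp
      obtain ⟨m, hm⟩ := Set.mem_iUnion.1 hq
      exact (Gs (max n m)).2.1.2.2 p (hsub n _ (le_max_left n m) hn)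
        q (hsub m _ (le_max_right n m) hm)
  -- partner functions
  have funmem : ∀ p ∈ Ginf, ∀ q ∈ Ginf, p.1 = q.1 → p.2 = q.2 := by
    intro p hp q hq h1
    have hb := (hGinfgood.2.2 p hp q hq).2
    rw [h1, dist_self, mul_zero] at hb
    exact dist_le_zero.1 hb
  have funmem' : ∀ p ∈ Ginf, ∀ q ∈ Ginf, p.2 = q.2 → p.1 = q.1 := by
    intro p hp q hq h2
    have hb := (hGinfgood.2.2 p hp q hq).1
    rw [h2, dist_self] at hb
    have h1K : (0:ℝ) < 1/K := by positivity
    have : dist p.1 q.1 ≤ 0 := by nlinarith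
    exact dist_le_zero.1 this
  set F : U → U := fun y => if hy : ∃ b, (y, b) ∈ Ginf then hy.choose else y with hFdef
  set F' : U → U := fun y => if hy : ∃ a, (a, y) ∈ Ginf then hy.choose else y with hF'def
  have hFval : ∀ p ∈ Ginf, F p.1 = p.2 := by
    intro p hp
    have hex : ∃ b, (p.1, b) ∈ Ginf := ⟨p.2, by rw [Prod.mk.eta]; exact hp⟩
    simp only [hFdef, dif_pos hex]
    exact funmem (p.1, hex.choose) hex.choose_spec p hp rfl
  have hF'val : ∀ p ∈ Ginf, F' p.2 = p.1 := by
    intro p hp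
    have hex : ∃ a, (a, p.2) ∈ Ginf := ⟨p.1, by rw [Prod.mk.eta]; exact hp⟩
    simp only [hF'def, dif_pos hex]
    exact funmem' (hex.choose, p.2) hex.choose_spec p hp rfl
  set S1 : Set U := Prod.fst '' Ginf with hS1def
  set S2 : Set U := Prod.snd '' Ginf with hS2def
  have hFmem : ∀ y ∈ S1, (y, F y) ∈ Ginf := by
    rintro y ⟨p, hp, rfl⟩
    rw [hFval p hp, Prod.mk.eta]
    exact hp
  have hF'mem : ∀ y ∈ S2, (F' y, y) ∈ Ginf := by
    rintro y ⟨p, hp, rfl⟩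
    rw [hF'val p hp, Prod.mk.eta]
    exact hp
  -- swapped graph
  have hGswap : UryGraph U x r N K (Prod.swap '' Ginf) := hGinfgood.swap hN0 hK1
  have hS2eq : Prod.fst '' (Prod.swap '' Ginf) = S2 := by
    rw [Set.image_image]
    rfl
  have hF'memswap : ∀ y ∈ Prod.fst '' (Prod.swap '' Ginf), (y, F' y) ∈ Prod.swap '' Ginf := by
    rw [hS2eq]
    intro y hy
    exact ⟨(F' y, y), hF'mem y hy, rfl⟩
  -- limit maps
  obtain ⟨g, hgval, hgbil, hggood, hgapprox⟩ :=
    ury_graph_limit hcomp hN0 hK0 hGinfgood F hFmem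
  obtain ⟨g', hg'val, hg'bil, hg'good, hg'approx⟩ :=
    ury_graph_limit hcomp hN0 hK0 hGswap F' hF'memswap
  rw [hS2eq] at hg'val hg'bil hg'good hg'approx
  -- density
  have hS1u : ∀ n, u n ∈ S1 := by
    intro n
    obtain ⟨b, hb⟩ := hGsmem1 n
    exact ⟨(u n, b), hmemGs (n+1) hb, rfl⟩
  have hS2u : ∀ n, u n ∈ S2 := by
    intro n
    obtain ⟨a, ha⟩ := hGsmem2 n
    exact ⟨(a, u n), hmemGs (n+1) ha, rfl⟩
  have hclos1 : ball x r ⊆ closure S1 := by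
    intro y hy
    rw [Metric.mem_closure_iff]
    intro ε hε
    obtain ⟨n, hn⟩ := hudense y hy ε hε
    exact ⟨u n, hS1u n, hn⟩
  have hclos2 : ball x r ⊆ closure S2 := by
    intro y hy
    rw [Metric.mem_closure_iff]
    intro ε hε
    obtain ⟨n, hn⟩ := hudense y hy ε hε
    exact ⟨u n, hS2u n, hn⟩
  -- inverse identities
  have hg'g : ∀ y ∈ ball x r, g' (g y) = y := by
    intro y hy
    have hy1 : y ∈ closure S1 := hclos1 hy
    obtain ⟨v, hv1, hv2, hv3⟩ := hgapprox y hy1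
    have hvS2 : ∀ n, F (v n) ∈ S2 := fun n => ⟨(v n, F (v n)), hFmem _ (hv1 n), rfl⟩
    have hgyc : g y ∈ closure S2 :=
      mem_closure_of_tendsto hv3 (Filter.Eventually.of_forall hvS2)
    have hvback : ∀ n, g' (F (v n)) = v n := by
      intro n
      rw [hg'val _ (hvS2 n)]
      exact hF'val (v n, F (v n)) (hFmem _ (hv1 n))
    have htend : Filter.Tendsto (fun n => g' (F (v n))) Filter.atTop (nhds (g' (g y))) := by
      rw [tendsto_iff_dist_tendsto_zero]
      apply squeeze_zero (fun n => dist_nonneg)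
        (fun n => (hg'bil _ (subset_closure (hvS2 n)) _ hgyc).2)
      have h0 := tendsto_iff_dist_tendsto_zero.1 hv3
      have := h0.const_mul K
      simpa using this
    have htend2 : Filter.Tendsto v Filter.atTop (nhds (g' (g y))) := by
      simp only [hvback] at htend
      exact htend
    exact tendsto_nhds_unique htend2 hv2
  have hgg' : ∀ y ∈ ball x r, g (g' y) = y := by
    intro y hy
    have hy2 : y ∈ closure S2 := hclos2 hy
    obtain ⟨v, hv1, hv2, hv3⟩ := hg'approx y hy2
    have hvS1 : ∀ n, F' (v n) ∈ S1 := fun n => ⟨(F' (v n), v n), hF'mem _ (hv1 n), rfl⟩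
    have hgyc : g' y ∈ closure S1 :=
      mem_closure_of_tendsto hv3 (Filter.Eventually.of_forall hvS1)
    have hvback : ∀ n, g (F' (v n)) = v n := by
      intro n
      rw [hgval _ (hvS1 n)]
      exact hFval (F' (v n), v n) (hF'mem _ (hv1 n))
    have htend : Filter.Tendsto (fun n => g (F' (v n))) Filter.atTop (nhds (g (g' y))) := by
      rw [tendsto_iff_dist_tendsto_zero]
      apply squeeze_zero (fun n => dist_nonneg)
        (fun n => (hgbil _ (subset_closure (hvS1 n)) _ hgyc).2)
      have h0 := tendsto_iff_dist_tendsto_zero.1 hv3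
      have := h0.const_mul K
      simpa using this
    have htend2 : Filter.Tendsto v Filter.atTop (nhds (g (g' y))) := by
      simp only [hvback] at htend
      exact htend
    exact tendsto_nhds_unique htend2 hv2
  -- maps to
  have hgmaps : ∀ y ∈ ball x r, g y ∈ ball x r := by
    intro y hy
    have hgd := (hggood y (hclos1 hy)).1
    have hyb := Metric.mem_ball.1 hy
    have ht : 0 < r - dist y x := by linarith
    have h1 : (1/N) * (r - dist y x) < 1 * (r - dist y x) :=
      mul_lt_mul_of_pos_right (by rw [div_lt_one hN0]; linarith) ht
    have t1 := dist_triangle (g y) y x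
    have hcm : dist (g y) y = dist y (g y) := dist_comm _ _
    rw [Metric.mem_ball]
    linarith
  have hg'maps : ∀ y ∈ ball x r, g' y ∈ ball x r := by
    intro y hy
    have hgd := (hg'good y (hclos2 hy)).1
    have hyb := Metric.mem_ball.1 hy
    have ht : 0 < r - dist y x := by linarith
    have h1 : (1/N) * (r - dist y x) < 1 * (r - dist y x) :=
      mul_lt_mul_of_pos_right (by rw [div_lt_one hN0]; linarith) ht
    have t1 := dist_triangle (g' y) y x
    have hcm : dist (g' y) y = dist y (g' y) := dist_comm _ _
    rw [Metric.mem_ball]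
    linarith
  -- mixed bilipschitz bounds
  have mixed : ∀ a b : U, a ∈ ball x r → b ∉ ball x r →
      (1/K) * dist a b ≤ dist (g a) b ∧ dist (g a) b ≤ K * dist a b := by
    intro a b ha hb
    have e1 : dist a (g a) ≤ (1/N) * (r - dist a x) := (hggood a (hclos1 ha)).1
    have hbx : r ≤ dist b x := not_lt.1 (fun hc => hb (Metric.mem_ball.2 hc))
    have htr : dist b x ≤ dist b a + dist a x := dist_triangle _ _ _
    have hab : r - dist a x ≤ dist a b := by
      have h2 := dist_comm b a
      linarith
    have e2 : dist a (g a) ≤ (1/N) * dist a b :=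
      le_trans e1 (mul_le_mul_of_nonneg_left hab (by positivity))
    have t1 := dist_triangle (g a) a b
    have t2 := dist_triangle a (g a) b
    have hcm : dist (g a) a = dist a (g a) := dist_comm _ _
    constructor
    · have hKN : 1/K ≤ 1 - 1/N := by
        have e3 : (1 - 1/N) - 1/K = ((N-1)*K - N)/(N*K) := by field_simp; try ring
        have e4 : (0:ℝ) ≤ ((N-1)*K - N)/(N*K) := div_nonneg (by linarith) (by positivity)
        linarith
      have e5 := mul_le_mul_of_nonneg_right hKN (dist_nonneg (x := a) (y := b))
      have hexp : (1 - 1/N) * dist a b = dist a b - (1/N) * dist a b := by ring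
      rw [hexp] at e5
      linarith
    · have hKN2 : 1 + 1/N ≤ K := by
        have e3 : K - (1 + 1/N) = (N*K - N - 1)/N := by field_simp; try ring
        have e4 : (0:ℝ) ≤ (N*K - N - 1)/N := div_nonneg (by linarith) hN0.le
        linarith
      have e5 := mul_le_mul_of_nonneg_right hKN2 (dist_nonneg (x := a) (y := b))
      have hexp : (1 + 1/N) * dist a b = dist a b + (1/N) * dist a b := by ring
      rw [hexp] at e5
      linarith
  -- membership of A pairs
  have hApair : ∀ a ∈ A, (a, f a) ∈ Ginf := by
    intro a ha
    exact hmemGs 0 ⟨a, ha, rfl⟩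
  have hgA : ∀ a ∈ A, g a = f a := by
    intro a ha
    have hmem : a ∈ S1 := ⟨(a, f a), hApair a ha, rfl⟩
    rw [hgval a hmem]
    exact hFval (a, f a) (hApair a ha)
  -- finish
  refine ⟨g, ⟨fun y hy => hgmaps y hy, ?_, ?_⟩, hgA, ?_, ?_, ?_, ?_⟩
  · -- InjOn
    intro y hy y' hy' heq
    have := hg'g y hy
    rw [heq, hg'g y' hy'] at this
    exact this.symm
  · -- SurjOn
    intro y hy
    exact ⟨g' y, hg'maps y hy, hgg' y hy⟩
  · -- Bijective glued
    rw [Function.bijective_iff_has_inverse]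
    refine ⟨fun z => if z ∈ ball x r then g' z else z, ?_, ?_⟩
    · intro z
      by_cases hz : z ∈ ball x r
      · simp only [if_pos hz, if_pos (hgmaps z hz)]
        exact hg'g z hz
      · simp only [if_neg hz]
    · intro z
      by_cases hz : z ∈ ball x r
      · simp only [if_pos hz, if_pos (hg'maps z hz)]
        exact hgg' z hz
      · simp only [if_neg hz]
  · -- bilipschitz glued
    intro p _ q _
    by_cases hp : p ∈ ball x r <;> by_cases hq : q ∈ ball x r
    · simp only [if_pos hp, if_pos hq]
      exact hgbil p (hclos1 hp) q (hclos1 hq)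
    · simp only [if_pos hp, if_neg hq]
      exact mixed p q hp hq
    · simp only [if_neg hp, if_pos hq]
      have := mixed q p hq hp
      rw [dist_comm p q, dist_comm p (g q)]
      exact this
    · simp only [if_neg hp, if_neg hq]
      constructor
      · have h1 : (1:ℝ)/K ≤ 1 := by rw [div_le_one hK0]; exact hK1
        have := mul_le_mul_of_nonneg_right h1 (dist_nonneg (x := p) (y := q))
        linarith
      · have := le_mul_of_one_le_left (dist_nonneg (x := p) (y := q)) hK1
        linarith
  · -- NGoodOn
    intro y hy
    exact (hggood y (hclos1 hy)).1
  · -- inverse good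
    intro y hy
    have := (hggood y (hclos1 hy)).2
    rwa [dist_comm y (g y)] at this
end

section
/- Let (X,d) be a metric space with a chosen basepoint x₀. Then the evaluation action LIP(X) × X → X, (g,x) ↦ g(x), is continuous, where LIP(X) carries the topology τ̂ induced by the metric d̂ and X carries its metric topology. -/
open Metric Set
open scoped Classical

/-- A bilipschitz auto-homeomorphism of a metric space `X`. -/
structure Bilip (X : Type) [MetricSpace X] where
  toFun : X → X
  invFun : X → X
  left_inv : Function.LeftInverse invFun toFun
  right_inv : Function.RightInverse invFun toFun
  bilip : ∃ K : ℝ, 1 ≤ K ∧ ∀ u v : X,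
    (1 / K) * dist u v ≤ dist (toFun u) (toFun v) ∧
    dist (toFun u) (toFun v) ≤ K * dist u v

namespace Bilip

variable {X : Type} [MetricSpace X]

/-- The set of bilipschitz constants of a map. -/
def lipSet (h : X → X) : Set ℝ :=
  {K | 1 ≤ K ∧ ∀ u v : X,
    (1 / K) * dist u v ≤ dist (h u) (h v) ∧ dist (h u) (h v) ≤ K * dist u v}

/-- `lip(h)`: the least bilipschitz constant of `h`. -/
noncomputable def lipConst (h : X → X) : ℝ := sInf (lipSet h)

/-- The semimetric `d_L(f,g) = log lip(f⁻¹ ∘ g)`. -/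
noncomputable def dL (f g : Bilip X) : ℝ := Real.log (lipConst (f.invFun ∘ g.toFun))

/-- The semimetric `d_n(f,g) = sup {d(f x, g x) : x ∈ B(x₀, n)}`. -/
noncomputable def dn (x₀ : X) (n : ℕ) (f g : Bilip X) : ℝ :=
  sSup ((fun x => dist (f.toFun x) (g.toFun x)) '' ball x₀ n)

/-- The semimetric `d_S(f,g) = Σ_n d_n(f,g) / 2ⁿ`. -/
noncomputable def dS (x₀ : X) (f g : Bilip X) : ℝ := ∑' n : ℕ, dn x₀ n f g / 2 ^ n

/-- The metric `d̂ = max(d_L, d_S)`. -/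
noncomputable def dHat (x₀ : X) (f g : Bilip X) : ℝ := max (dL f g) (dS x₀ f g)

/-- Composition of bilipschitz homeomorphisms: `(f.comp g) x = f (g x)`. -/
noncomputable def comp (f g : Bilip X) : Bilip X where
  toFun := f.toFun ∘ g.toFun
  invFun := g.invFun ∘ f.invFun
  left_inv := fun x => by simp [f.left_inv _, g.left_inv _]
  right_inv := fun x => by simp [f.right_inv _, g.right_inv _]
  bilip := by
    obtain ⟨K, hK1, hK⟩ := f.bilip
    obtain ⟨L, hL1, hL⟩ := g.bilip
    have hK0 : (0:ℝ) < K := lt_of_lt_of_le one_pos hK1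
    have hL0 : (0:ℝ) < L := lt_of_lt_of_le one_pos hL1
    refine ⟨K * L, by nlinarith, fun u v => ?_⟩
    have h1 := hK (g.toFun u) (g.toFun v)
    have h2 := hL u v
    constructor
    · calc (1 / (K * L)) * dist u v = (1 / K) * ((1 / L) * dist u v) := by
            ring
        _ ≤ (1 / K) * dist (g.toFun u) (g.toFun v) := by
            apply mul_le_mul_of_nonneg_left h2.1 (by positivity)
        _ ≤ dist (f.toFun (g.toFun u)) (f.toFun (g.toFun v)) := h1.1
    · calc dist (f.toFun (g.toFun u)) (f.toFun (g.toFun v))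
          ≤ K * dist (g.toFun u) (g.toFun v) := h1.2
        _ ≤ K * (L * dist u v) := by
            apply mul_le_mul_of_nonneg_left h2.2 (le_of_lt hK0)
        _ = (K * L) * dist u v := by ring

/-- The inverse of a bilipschitz homeomorphism. -/
noncomputable def inv (f : Bilip X) : Bilip X where
  toFun := f.invFun
  invFun := f.toFun
  left_inv := f.right_inv
  right_inv := f.left_inv
  bilip := by
    obtain ⟨K, hK1, hK⟩ := f.bilip
    have hK0 : (0:ℝ) < K := lt_of_lt_of_le one_pos hK1
    refine ⟨K, hK1, fun u v => ?_⟩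
    have h := hK (f.invFun u) (f.invFun v)
    rw [f.right_inv u, f.right_inv v] at h
    constructor
    · rw [one_div, inv_mul_le_iff₀ hK0]
      exact h.2
    · have := h.1
      rw [one_div, inv_mul_le_iff₀ hK0] at this
      nlinarith [this]

/-- The identity as a bilipschitz homeomorphism. -/
noncomputable def one : Bilip X where
  toFun := id
  invFun := id
  left_inv := fun _ => rfl
  right_inv := fun _ => rfl
  bilip := ⟨1, le_refl 1, fun u v => by norm_num⟩

end Bilip

namespace Bilip

variable {X : Type} [MetricSpace X]

lemma lipSet_nonempty_comp (f g : Bilip X) : (lipSet (f.invFun ∘ g.toFun)).Nonempty := by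
  obtain ⟨K, hK⟩ := ((f.inv).comp g).bilip
  exact ⟨K, hK⟩

lemma one_le_lipConst_comp (f g : Bilip X) : 1 ≤ lipConst (f.invFun ∘ g.toFun) :=
  le_csInf (lipSet_nonempty_comp f g) fun _ hK => hK.1

lemma lip_bound_of_lt {h : X → X} (hne : (lipSet h).Nonempty) {K' : ℝ}
    (hK' : lipConst h < K') : ∀ u v, dist (h u) (h v) ≤ K' * dist u v := by
  obtain ⟨K, hKmem, hKlt⟩ := exists_lt_of_csInf_lt hne hK'
  intro u v
  exact (hKmem.2 u v).2.trans (mul_le_mul_of_nonneg_right hKlt.le dist_nonneg)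

lemma dn_nonneg (x₀ : X) (n : ℕ) (f g : Bilip X) : 0 ≤ dn x₀ n f g := by
  apply Real.sSup_nonneg
  rintro y ⟨u, -, rfl⟩
  exact dist_nonneg

lemma dist_le_on_ball {f g : Bilip X} {Kf Kg : ℝ} (hKf0 : 0 ≤ Kf) (hKg0 : 0 ≤ Kg)
    (hf : ∀ u v, dist (f.toFun u) (f.toFun v) ≤ Kf * dist u v)
    (hg : ∀ u v, dist (g.toFun u) (g.toFun v) ≤ Kg * dist u v)
    (x₀ : X) (n : ℕ) :
    ∀ u ∈ ball x₀ (n : ℝ), dist (f.toFun u) (g.toFun u) ≤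
      dist (f.toFun x₀) (g.toFun x₀) + (Kf + Kg) * n := by
  intro u hu
  rw [mem_ball] at hu
  have h1 : dist (f.toFun u) (g.toFun u) ≤
      dist (f.toFun u) (f.toFun x₀) + dist (f.toFun x₀) (g.toFun x₀) +
        dist (g.toFun x₀) (g.toFun u) := dist_triangle4 _ _ _ _
  have h2 := hf u x₀
  have h3 := hg x₀ u
  have hd : dist u x₀ ≤ n := hu.le
  have hd' : dist x₀ u ≤ n := by rwa [dist_comm]
  nlinarith [dist_nonneg (x := u) (y := x₀), dist_nonneg (x := x₀) (y := u)]

lemma bddAbove_image {f g : Bilip X} {Kf Kg : ℝ} (hKf0 : 0 ≤ Kf) (hKg0 : 0 ≤ Kg)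
    (hf : ∀ u v, dist (f.toFun u) (f.toFun v) ≤ Kf * dist u v)
    (hg : ∀ u v, dist (g.toFun u) (g.toFun v) ≤ Kg * dist u v)
    (x₀ : X) (n : ℕ) :
    BddAbove ((fun x => dist (f.toFun x) (g.toFun x)) '' ball x₀ n) := by
  refine ⟨dist (f.toFun x₀) (g.toFun x₀) + (Kf + Kg) * n, ?_⟩
  rintro y ⟨u, hu, rfl⟩
  exact dist_le_on_ball hKf0 hKg0 hf hg x₀ n u hu

lemma dn_le {f g : Bilip X} {Kf Kg : ℝ} (hKf0 : 0 ≤ Kf) (hKg0 : 0 ≤ Kg)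
    (hf : ∀ u v, dist (f.toFun u) (f.toFun v) ≤ Kf * dist u v)
    (hg : ∀ u v, dist (g.toFun u) (g.toFun v) ≤ Kg * dist u v)
    (x₀ : X) (n : ℕ) :
    dn x₀ n f g ≤ dist (f.toFun x₀) (g.toFun x₀) + (Kf + Kg) * n := by
  apply Real.sSup_le
  · rintro y ⟨u, hu, rfl⟩
    exact dist_le_on_ball hKf0 hKg0 hf hg x₀ n u hu
  · positivity

lemma summable_dn {f g : Bilip X} {Kf Kg : ℝ} (hKf0 : 0 ≤ Kf) (hKg0 : 0 ≤ Kg)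
    (hf : ∀ u v, dist (f.toFun u) (f.toFun v) ≤ Kf * dist u v)
    (hg : ∀ u v, dist (g.toFun u) (g.toFun v) ≤ Kg * dist u v)
    (x₀ : X) :
    Summable (fun n : ℕ => dn x₀ n f g / 2 ^ n) := by
  set C := dist (f.toFun x₀) (g.toFun x₀) with hC
  have hC0 : 0 ≤ C := dist_nonneg
  have hmaj : Summable (fun n : ℕ =>
      C * (1/2 : ℝ) ^ n + (Kf + Kg) * ((n : ℝ) * (1/2 : ℝ) ^ n)) := by
    refine Summable.add ((summable_geometric_of_lt_one (by norm_num) (by norm_num)).mul_left C)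
      (Summable.mul_left _ ?_)
    have := summable_pow_mul_geometric_of_norm_lt_one (R := ℝ) 1
      (r := (1/2 : ℝ)) (by rw [Real.norm_eq_abs, abs_of_nonneg (by norm_num : (0:ℝ) ≤ 1/2)]; norm_num)
    simpa using this
  refine Summable.of_nonneg_of_le (fun n => ?_) (fun n => ?_) hmaj
  · have := dn_nonneg x₀ n f g
    positivity
  · have h1 : dn x₀ n f g ≤ C + (Kf + Kg) * n := dn_le hKf0 hKg0 hf hg x₀ n
    have h2 : (0:ℝ) < 2 ^ n := by positivity
    rw [div_le_iff₀ h2]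
    have heq : (C * (1/2:ℝ)^n + (Kf+Kg) * ((n:ℝ) * (1/2:ℝ)^n)) * 2^n
        = C + (Kf + Kg) * n := by
      have h4 : ((1:ℝ)/2)^n = ((2:ℝ)^n)⁻¹ := by
        rw [one_div, inv_pow]
      rw [h4]
      field_simp
    rw [heq]
    exact h1

end Bilip

/-- The evaluation action LIP(X) × X → X is continuous, where LIP(X) carries
the topology of the metric d̂ and X its metric topology. -/
theorem lip_action_continuous (X : Type) [MetricSpace X] (x₀ : X) :
    ∀ f : Bilip X, ∀ x : X, ∀ ε : ℝ, 0 < ε → ∃ δ : ℝ, 0 < δ ∧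
      ∀ f₁ : Bilip X, ∀ x₁ : X,
        Bilip.dHat x₀ f f₁ < δ → dist x x₁ < δ →
          dist (f₁.toFun x₁) (f.toFun x) < ε := by
  intro f x ε hε
  obtain ⟨Kf, hKf1, hKf⟩ := f.bilip
  have hKf0 : (0:ℝ) < Kf := lt_of_lt_of_le one_pos hKf1
  set n : ℕ := ⌈dist x x₀⌉₊ + 1 with hn
  have hxball : x ∈ ball x₀ (n : ℝ) := by
    rw [mem_ball]
    have h1 : dist x x₀ ≤ (⌈dist x x₀⌉₊ : ℝ) := Nat.le_ceil _
    have : ((⌈dist x x₀⌉₊ : ℝ)) < n := by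
      rw [hn]; push_cast; linarith
    linarith
  set M : ℝ := Kf * Real.exp 1 + 2 ^ n with hM
  have hM0 : 0 < M := by
    have := Real.exp_pos 1
    positivity
  refine ⟨min 1 (ε / (2 * M)), lt_min one_pos (by positivity), fun f₁ x₁ hdh hdx => ?_⟩
  set δ := min 1 (ε / (2 * M)) with hδ
  have hδ1 : δ ≤ 1 := min_le_left _ _
  have hδε : δ ≤ ε / (2 * M) := min_le_right _ _
  have hδ0 : 0 < δ := lt_min one_pos (by positivity)
  -- split dHat
  have hdL : Bilip.dL f f₁ < δ := lt_of_le_of_lt (le_max_left _ _) hdh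
  have hdS : Bilip.dS x₀ f f₁ < δ := lt_of_le_of_lt (le_max_right _ _) hdh
  -- Lipschitz bound for f⁻¹ ∘ f₁
  have hne := Bilip.lipSet_nonempty_comp f f₁
  have hpos : 0 < Bilip.lipConst (f.invFun ∘ f₁.toFun) :=
    lt_of_lt_of_le one_pos (Bilip.one_le_lipConst_comp f f₁)
  have hlt : Bilip.lipConst (f.invFun ∘ f₁.toFun) < Real.exp 1 := by
    have : Real.log (Bilip.lipConst (f.invFun ∘ f₁.toFun)) < 1 := by
      have : Bilip.dL f f₁ < 1 := lt_of_lt_of_le hdL hδ1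
      exact this
    exact (Real.log_lt_iff_lt_exp hpos).mp this
  have hcomp := Bilip.lip_bound_of_lt hne hlt
  -- Lipschitz bound for f₁
  have hf₁lip : ∀ u v : X, dist (f₁.toFun u) (f₁.toFun v) ≤ (Kf * Real.exp 1) * dist u v := by
    intro u v
    have h1 : dist (f₁.toFun u) (f₁.toFun v)
        = dist (f.toFun (f.invFun (f₁.toFun u))) (f.toFun (f.invFun (f₁.toFun v))) := by
      rw [f.right_inv, f.right_inv]
    rw [h1]
    calc dist (f.toFun (f.invFun (f₁.toFun u))) (f.toFun (f.invFun (f₁.toFun v)))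
        ≤ Kf * dist (f.invFun (f₁.toFun u)) (f.invFun (f₁.toFun v)) :=
          (hKf _ _).2
      _ ≤ Kf * (Real.exp 1 * dist u v) :=
          mul_le_mul_of_nonneg_left (hcomp u v) hKf0.le
      _ = (Kf * Real.exp 1) * dist u v := by ring
  have hf₁lip0 : (0:ℝ) ≤ Kf * Real.exp 1 := by positivity
  have hflip : ∀ u v : X, dist (f.toFun u) (f.toFun v) ≤ Kf * dist u v := fun u v => (hKf u v).2
  -- term 2 : dist (f₁ x) (f x)
  have hdnx : dist (f.toFun x) (f₁.toFun x) ≤ Bilip.dn x₀ n f f₁ :=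
    le_csSup (Bilip.bddAbove_image hKf0.le hf₁lip0 hflip hf₁lip x₀ n) ⟨x, hxball, rfl⟩
  have hsum := Bilip.summable_dn hKf0.le hf₁lip0 hflip hf₁lip x₀
  have hterm : Bilip.dn x₀ n f f₁ / 2 ^ n ≤ Bilip.dS x₀ f f₁ :=
    Summable.le_tsum hsum n (fun m _ => by
      have := Bilip.dn_nonneg x₀ m f f₁; positivity)
  have h2n : (0:ℝ) < 2 ^ n := by positivity
  have hdnlt : Bilip.dn x₀ n f f₁ < 2 ^ n * δ := by
    have : Bilip.dn x₀ n f f₁ / 2 ^ n < δ := lt_of_le_of_lt hterm hdS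
    rw [div_lt_iff₀ h2n] at this
    linarith
  -- term 1 : dist (f₁ x₁) (f₁ x)
  have hterm1 : dist (f₁.toFun x₁) (f₁.toFun x) ≤ (Kf * Real.exp 1) * δ := by
    calc dist (f₁.toFun x₁) (f₁.toFun x) ≤ (Kf * Real.exp 1) * dist x₁ x := hf₁lip x₁ x
      _ ≤ (Kf * Real.exp 1) * δ := by
          apply mul_le_mul_of_nonneg_left _ hf₁lip0
          rw [dist_comm]; exact hdx.le
  -- combine
  have htri : dist (f₁.toFun x₁) (f.toFun x)
      ≤ dist (f₁.toFun x₁) (f₁.toFun x) + dist (f.toFun x) (f₁.toFun x) := by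
    rw [dist_comm (f.toFun x) (f₁.toFun x)]
    exact dist_triangle _ _ _
  have hMδ : M * δ ≤ ε / 2 := by
    have : M * δ ≤ M * (ε / (2 * M)) := mul_le_mul_of_nonneg_left hδε hM0.le
    calc M * δ ≤ M * (ε / (2 * M)) := this
      _ = ε / 2 := by field_simp
  calc dist (f₁.toFun x₁) (f.toFun x)
      ≤ dist (f₁.toFun x₁) (f₁.toFun x) + dist (f.toFun x) (f₁.toFun x) := htri
    _ < (Kf * Real.exp 1) * δ + 2 ^ n * δ := by
        have := lt_of_le_of_lt hdnx hdnlt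
        linarith
    _ = M * δ := by rw [hM]; ring
    _ ≤ ε / 2 := hMδ
    _ < ε := by linarith
end

section
/- Let x, u, v be points of the Urysohn space 𝕌 and r > 0 be such that u, v ∈ B(x, r/15). Then there is a 2-bilipschitz bijection g : 𝕌 → 𝕌 such that g(u) = v and g is the identity on 𝕌 ∖ B(x,r). -/
open Metric Set
open scoped Classical

lemma katetov_realize {U : Type} [MetricSpace U] (hU : IsUrysohn U)
    (S : Finset U) (ξ : U → ℝ)
    (h1 : ∀ s ∈ S, ∀ t ∈ S, dist s t ≤ ξ s + ξ t)
    (h2 : ∀ s ∈ S, ∀ t ∈ S, ξ s ≤ ξ t + dist s t) :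
    ∃ w : U, ∀ s ∈ S, dist w s = ξ s := by
  have hnn : ∀ s ∈ S, 0 ≤ ξ s := by
    intro s hs
    have := h1 s hs s hs
    rw [dist_self] at this
    linarith
  by_cases hzero : ∃ s₀ ∈ S, ξ s₀ = 0
  · obtain ⟨s₀, hs₀, hξ0⟩ := hzero
    refine ⟨s₀, fun s hs => ?_⟩
    have A := h1 s₀ hs₀ s hs
    have B := h2 s hs s₀ hs₀
    rw [hξ0] at A B
    rw [dist_comm] at B
    linarith
  · push_neg at hzero
    have hpos : ∀ s ∈ S, 0 < ξ s := fun s hs =>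
      lt_of_le_of_ne (hnn s hs) (Ne.symm (hzero s hs))
    set Y := Option {a : U // a ∈ S} with hY
    let dY : Y → Y → ℝ := fun y z =>
      match y, z with
      | none, none => 0
      | none, some t => ξ t.1
      | some s, none => ξ s.1
      | some s, some t => dist s.1 t.1
    letI : MetricSpace Y :=
      { dist := dY
        dist_self := by rintro (_ | s) <;> simp [dY]
        dist_comm := by
          rintro (_ | s) (_ | t) <;> simp [dY, dist_comm]
        dist_triangle := by
          rintro (_ | s) (_ | t) (_ | w)
          · show (0:ℝ) ≤ 0 + 0
            norm_num
          · show ξ w.1 ≤ 0 + ξ w.1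
            norm_num
          · show (0:ℝ) ≤ ξ t.1 + ξ t.1
            have := hnn _ t.2
            linarith
          · show ξ w.1 ≤ ξ t.1 + dist t.1 w.1
            have := h2 _ w.2 _ t.2
            rw [dist_comm] at this
            linarith
          · show ξ s.1 ≤ ξ s.1 + 0
            norm_num
          · show dist s.1 w.1 ≤ ξ s.1 + ξ w.1
            exact h1 _ s.2 _ w.2
          · show ξ s.1 ≤ dist s.1 t.1 + ξ t.1
            have := h2 _ s.2 _ t.2
            linarith
          · exact dist_triangle s.1 t.1 w.1
        eq_of_dist_eq_zero := by
          rintro (_ | s) (_ | t) h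
          · rfl
          · exact absurd h (ne_of_lt (hpos _ t.2)).symm
          · exact absurd h (ne_of_lt (hpos _ s.2)).symm
          · simp [dY] at h
            exact congrArg _ h }
    haveI : Countable Y := by
      haveI : Fintype {a : U // a ∈ S} := FinsetCoe.fintype S
      infer_instance
    obtain ⟨f, hf⟩ := hU.2.2.1 Y
    set A : Set U := Set.range (fun y : {a : U // a ∈ S} => f (some y)) with hA
    have hAfin : A.Finite := by
      haveI : Fintype {a : U // a ∈ S} := FinsetCoe.fintype S
      exact Set.finite_range _
    let F : U → U := fun q =>
      if h : ∃ y : {a : U // a ∈ S}, f (some y) = q then (h.choose).1 else q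
    have hFval : ∀ y : {a : U // a ∈ S}, F (f (some y)) = y.1 := by
      intro y
      have hex : ∃ y' : {a : U // a ∈ S}, f (some y') = f (some y) := ⟨y, rfl⟩
      have : hex.choose = y := by
        have h' := hex.choose_spec
        have := hf.injective h'
        exact Option.some_injective _ this
      simp only [F, dif_pos hex, this]
    have hdist : ∀ p ∈ A, ∀ q ∈ A, dist (F p) (F q) = dist p q := by
      rintro p ⟨y, rfl⟩ q ⟨y', rfl⟩
      rw [hFval y, hFval y', hf.dist_eq]
      rfl
    obtain ⟨G, hG⟩ := hU.2.2.2 A F hAfin hdist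
    refine ⟨G (f none), fun s hs => ?_⟩
    have hsA : f (some ⟨s, hs⟩) ∈ A := ⟨⟨s, hs⟩, rfl⟩
    have hGs : G (f (some ⟨s, hs⟩)) = s := by
      rw [hG _ hsA, hFval]
    calc dist (G (f none)) s = dist (G (f none)) (G (f (some ⟨s, hs⟩))) := by rw [hGs]
      _ = dist (f none) (f (some ⟨s, hs⟩)) := G.dist_eq _ _
      _ = ξ s := by rw [hf.dist_eq]; rfl

section Step

variable {U : Type} [MetricSpace U]

/-- Taper function: distance to the boundary sphere of `ball x r` (clipped at 0). -/
def rho (x : U) (r : ℝ) (s : U) : ℝ := max 0 (r - dist x s)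

lemma rho_nonneg (x : U) (r : ℝ) (s : U) : 0 ≤ rho x r s := le_max_left _ _

lemma rho_lip (x : U) (r : ℝ) (s t : U) : rho x r s ≤ rho x r t + dist s t := by
  have h : r - dist x s ≤ (r - dist x t) + dist s t := by
    have h1 := dist_triangle x s t
    have h2 := dist_comm s t
    have h3 := dist_triangle x t s
    linarith
  have h0 : (0:ℝ) ≤ rho x r t + dist s t :=
    add_nonneg (rho_nonneg x r t) dist_nonneg
  exact max_le h0 (h.trans (add_le_add (le_max_right _ _) le_rfl))

lemma rho_pos_eq {x : U} {r : ℝ} {s : U} (h : 0 < rho x r s) :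
    rho x r s = r - dist x s := by
  rcases max_cases (0:ℝ) (r - dist x s) with ⟨h0, _⟩ | ⟨h0, _⟩
  · rw [rho] at h ⊢
    rw [h0] at h
    exact absurd h (lt_irrefl 0)
  · rw [rho, h0]

/-- Two pairs are 2-bilipschitz compatible. -/
def PairOK (p q : U × U) : Prop :=
  dist p.2 q.2 ≤ 2 * dist p.1 q.1 ∧ dist p.1 q.1 ≤ 2 * dist p.2 q.2

/-- Displacement of a pair is controlled by the taper at both endpoints. -/
def PairDisp (x : U) (r : ℝ) (p : U × U) : Prop :=
  2 * dist p.1 p.2 ≤ rho x r p.1 ∧ 2 * dist p.1 p.2 ≤ rho x r p.2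

lemma pairOK_swap {p q : U × U} (h : PairOK p q) : PairOK p.swap q.swap := ⟨h.2, h.1⟩

lemma pairDisp_swap {x : U} {r : ℝ} {p : U × U} (h : PairDisp x r p) :
    PairDisp x r p.swap := by
  obtain ⟨h1, h2⟩ := h
  constructor <;> simp only [Prod.fst_swap, Prod.snd_swap, dist_comm p.2 p.1] <;> assumption

lemma min_add_min_ge {a b c d X : ℝ} (h1 : X ≤ a + c) (h2 : X ≤ a + d)
    (h3 : X ≤ b + c) (h4 : X ≤ b + d) : X ≤ min a b + min c d := by
  rcases min_cases a b with ⟨h, _⟩ | ⟨h, _⟩ <;> rcases min_cases c d with ⟨h', _⟩ | ⟨h', _⟩ <;>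
    rw [h, h'] <;> assumption

/-- The key one-point extension step (forward direction). -/
lemma step_forth (hU : IsUrysohn U) (x : U) (r : ℝ)
    (L : List (U × U)) (hL : L ≠ [])
    (hOK : ∀ p ∈ L, ∀ q ∈ L, PairOK p q) (hD : ∀ p ∈ L, PairDisp x r p) (z : U) :
    ∃ w : U, (∀ p ∈ L, PairOK (z, w) p) ∧ PairDisp x r (z, w) := by
  by_cases hC : ∀ p ∈ L, dist z p.2 ≤ 2 * dist z p.1 ∧ dist z p.1 ≤ 2 * dist z p.2
  · refine ⟨z, fun p hp => hC p hp, ?_⟩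
    constructor <;> simp [dist_self, rho_nonneg]
  · -- z is genuinely inside the ball
    have hρz : 0 < rho x r z := by
      rcases lt_or_ge 0 (rho x r z) with h | h
      · exact h
      exfalso
      have hxz : r ≤ dist x z := by
        by_contra hxz
        push_neg at hxz
        have h1 : (0:ℝ) < r - dist x z := by linarith
        have h2 : (0:ℝ) < rho x r z := lt_of_lt_of_le h1 (le_max_right _ _)
        linarith
      apply hC
      intro p hp
      have hdp : 2 * dist p.1 p.2 ≤ rho x r p.1 := (hD p hp).1
      have hra : rho x r p.1 ≤ dist z p.1 := by
        have h5 := dist_triangle x p.1 z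
        have h6 := dist_comm p.1 z
        exact max_le dist_nonneg (by linarith)
      have h1 : 2 * dist p.1 p.2 ≤ dist z p.1 := hdp.trans hra
      have t1 := dist_triangle z p.1 p.2
      have t2 := dist_triangle z p.2 p.1
      rw [dist_comm p.2 p.1] at t2
      constructor <;> linarith
    set T : Finset (U × U) := L.toFinset with hT
    have hTne : T.Nonempty := by
      rcases List.exists_mem_of_ne_nil L hL with ⟨p, hp⟩
      exact ⟨p, List.mem_toFinset.2 hp⟩
    have hmemT : ∀ p ∈ T, p ∈ L := fun p hp => List.mem_toFinset.1 hp
    set M : ℝ := T.sup' hTne (fun p => dist z p.2 - 2 * dist z p.1) with hM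
    set η : ℝ := max M (rho x r z / 3) with hη
    have hηρ3 : rho x r z / 3 ≤ η := le_max_right _ _
    have hηpos : 0 < η := lt_of_lt_of_le (by linarith) hηρ3
    have hηM : ∀ p ∈ T, dist z p.2 - 2 * dist z p.1 ≤ η := by
      intro p hp
      exact (Finset.le_sup' (fun p => dist z p.2 - 2 * dist z p.1) hp).trans (le_max_left _ _)
    have hηle : η ≤ rho x r z / 2 := by
      apply max_le
      · apply Finset.sup'_le
        intro p hp
        have hp' := hmemT p hp
        have hdp : 2 * dist p.1 p.2 ≤ rho x r p.1 := (hD p hp').1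
        have hlip := rho_lip x r p.1 z
        have t1 := dist_triangle z p.1 p.2
        have t2 := dist_comm p.1 z
        have t3 := dist_nonneg (x := z) (y := p.1)
        linarith
      · linarith
    -- the candidate distance function
    set F : U → ℝ := fun s => T.inf' hTne (fun p => 2 * dist z p.1 + dist p.2 s) with hF
    set G : U → ℝ := fun s => dist z s + η with hG
    have hF_le : ∀ (s : U), ∀ p ∈ T, F s ≤ 2 * dist z p.1 + dist p.2 s := by
      intro s p hp
      rw [hF]
      exact Finset.inf'_le _ hp
    have hF_ex : ∀ s : U, ∃ p ∈ T, F s = 2 * dist z p.1 + dist p.2 s := by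
      intro s
      obtain ⟨p, hp, heq⟩ := Finset.exists_mem_eq_inf' hTne (fun p => 2 * dist z p.1 + dist p.2 s)
      exact ⟨p, hp, by rw [hF]; exact heq⟩
    set ξ : U → ℝ := fun s => min (F s) (G s) with hξ
    have hξ_le_f : ∀ (s : U), ∀ p ∈ T, ξ s ≤ 2 * dist z p.1 + dist p.2 s := by
      intro s p hp
      exact (min_le_left _ _).trans (hF_le s p hp)
    have hξ_le_g : ∀ s : U, ξ s ≤ dist z s + η := fun s => min_le_right _ _
    have hξ_cases : ∀ s : U,
        (∃ p ∈ T, ξ s = 2 * dist z p.1 + dist p.2 s) ∨ ξ s = dist z s + η := by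
      intro s
      rcases min_cases (F s) (G s) with ⟨h, _⟩ | ⟨h, _⟩
      · left
        obtain ⟨p, hp, heq⟩ := hF_ex s
        exact ⟨p, hp, by rw [hξ]; simp only; rw [h, heq]⟩
      · right
        rw [hξ]; simp only; rw [h, hG]
    set S : Finset U := insert x (insert z (T.image Prod.snd)) with hS
    have h1 : ∀ s ∈ S, ∀ t ∈ S, dist s t ≤ ξ s + ξ t := by
      intro s _ t _
      apply min_add_min_ge
      · -- F s + F t
        obtain ⟨p, hp, hps⟩ := hF_ex s
        obtain ⟨q, hq, hqt⟩ := hF_ex t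
        rw [hps, hqt]
        have hOKpq : dist p.2 q.2 ≤ 2 * dist p.1 q.1 :=
          (hOK p (hmemT p hp) q (hmemT q hq)).1
        have t1 := dist_triangle s p.2 t
        have t2 := dist_triangle p.2 q.2 t
        have t3 := dist_triangle p.1 z q.1
        have t4 := dist_comm s p.2
        have t5 := dist_comm p.1 z
        have t6 := dist_comm p.2 s
        linarith
      · -- F s + G t
        obtain ⟨p, hp, hps⟩ := hF_ex s
        rw [hps]
        have hM' := hηM p hp
        have t1 := dist_triangle s p.2 z
        have t2 := dist_triangle s z t
        have t3 := dist_comm s p.2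
        have t4 := dist_comm s z
        have t5 := dist_triangle p.2 z s
        show dist s t ≤ 2 * dist z p.1 + dist p.2 s + (dist z t + η)
        have t6 := dist_comm p.2 s
        have t7 := dist_triangle z p.2 s
        linarith
      · -- G s + F t
        obtain ⟨q, hq, hqt⟩ := hF_ex t
        rw [hqt]
        have hM' := hηM q hq
        show dist s t ≤ dist z s + η + (2 * dist z q.1 + dist q.2 t)
        have t1 := dist_triangle s z t
        have t2 := dist_triangle z q.2 t
        have t4 := dist_comm s z
        linarith
      · show dist s t ≤ dist z s + η + (dist z t + η)
        have t1 := dist_triangle s z t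
        have t2 := dist_comm s z
        linarith
    have h2 : ∀ s ∈ S, ∀ t ∈ S, ξ s ≤ ξ t + dist s t := by
      intro s _ t _
      rcases hξ_cases t with ⟨q, hq, hqt⟩ | hqt
      · rw [hqt]
        have := hξ_le_f s q hq
        have t1 := dist_triangle q.2 t s
        have t2 := dist_comm t s
        have t3 := dist_triangle q.2 s t
        linarith
      · rw [hqt]
        have := hξ_le_g s
        have t1 := dist_triangle z t s
        have t2 := dist_comm t s
        linarith
    obtain ⟨w, hw⟩ := katetov_realize hU S ξ h1 h2
    have hxS : x ∈ S := by rw [hS]; exact Finset.mem_insert_self _ _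
    have hzS : z ∈ S := by
      rw [hS]; exact Finset.mem_insert_of_mem (Finset.mem_insert_self _ _)
    have hp2S : ∀ p ∈ T, p.2 ∈ S := by
      intro p hp
      rw [hS]
      exact Finset.mem_insert_of_mem (Finset.mem_insert_of_mem
        (Finset.mem_image_of_mem Prod.snd hp))
    have hwx : dist w x = ξ x := hw x hxS
    have hwz : dist w z = ξ z := hw z hzS
    have hξznn : 0 ≤ ξ z := by rw [← hwz]; exact dist_nonneg
    have hξxnn : 0 ≤ ξ x := by rw [← hwx]; exact dist_nonneg
    refine ⟨w, ?_, ?_⟩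
    · intro p hpL
      have hp : p ∈ T := List.mem_toFinset.2 hpL
      have hwp2 : dist w p.2 = ξ p.2 := hw p.2 (hp2S p hp)
      constructor
      · show dist w p.2 ≤ 2 * dist z p.1
        rw [hwp2]
        have := hξ_le_f p.2 p hp
        rw [dist_self] at this
        linarith
      · show dist z p.1 ≤ 2 * dist w p.2
        rw [hwp2]
        rcases hξ_cases p.2 with ⟨q, hq, hqe⟩ | hqe
        · rw [hqe]
          have hOKqp : dist q.1 p.1 ≤ 2 * dist q.2 p.2 :=
            (hOK q (hmemT q hq) p hpL).2
          have t1 := dist_triangle z q.1 p.1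
          have t2 := dist_nonneg (x := z) (y := q.1)
          linarith
        · rw [hqe]
          have hdp : 2 * dist p.1 p.2 ≤ rho x r p.2 := (hD p hpL).2
          have hlip := rho_lip x r p.2 z
          have t1 := dist_triangle z p.2 p.1
          have t2 := dist_comm p.2 p.1
          have t3 := dist_comm p.2 z
          have t4 := dist_nonneg (x := z) (y := p.2)
          linarith
    · have hzw : dist z w = ξ z := by rw [dist_comm]; exact hwz
      constructor
      · show 2 * dist z w ≤ rho x r z
        rw [hzw]
        have := hξ_le_g z
        rw [dist_self] at this
        linarith
      · show 2 * dist z w ≤ rho x r w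
        rw [hzw]
        have hrw : r - ξ x ≤ rho x r w := by
          have : dist x w = ξ x := by rw [dist_comm]; exact hwx
          rw [rho, ← this]
          exact le_max_right _ _
        have hkey : 2 * ξ z + ξ x ≤ r := by
          rcases le_or_gt M (rho x r z / 3) with hcase | hcase
          · have hηeq : η = rho x r z / 3 := max_eq_right hcase
            have hz1 : ξ z ≤ η := by
              have := hξ_le_g z
              rw [dist_self] at this
              linarith
            have hx1 : ξ x ≤ dist z x + η := hξ_le_g x
            have hρeq : rho x r z = r - dist x z := rho_pos_eq hρz
            have t1 := dist_comm z x
            linarith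
          · have hηeq : η = M := max_eq_left (le_of_lt hcase)
            have hMpos : 0 < M := lt_trans (by linarith) hcase
            obtain ⟨p₀, hp₀, hMeq⟩ :=
              Finset.exists_mem_eq_sup' hTne (fun p => dist z p.2 - 2 * dist z p.1)
            have hp₀L := hmemT p₀ hp₀
            have hd2 : 2 * dist p₀.1 p₀.2 ≤ rho x r p₀.2 := (hD _ hp₀L).2
            have hρp₀ : rho x r p₀.2 = r - dist x p₀.2 := by
              apply rho_pos_eq
              rcases lt_or_ge 0 (rho x r p₀.2) with h | h
              · exact h
              exfalso
              have hdist0 : dist p₀.1 p₀.2 = 0 := by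
                have := dist_nonneg (x := p₀.1) (y := p₀.2)
                linarith
              have t1 := dist_triangle z p₀.1 p₀.2
              rw [hdist0] at t1
              have : M ≤ 0 := by
                rw [← hM] at hMeq
                rw [hMeq]
                have := dist_nonneg (x := z) (y := p₀.1)
                linarith
              linarith
            have hz1 : ξ z ≤ M := by
              have := hξ_le_g z
              rw [dist_self] at this
              linarith
            have hx1 : ξ x ≤ 2 * dist z p₀.1 + dist p₀.2 x := hξ_le_f x p₀ hp₀
            have hMle : M ≤ dist p₀.1 p₀.2 - dist z p₀.1 := by
              rw [← hM] at hMeq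
              rw [hMeq]
              have := dist_triangle z p₀.1 p₀.2
              linarith
            have t1 := dist_comm p₀.2 x
            linarith
        linarith
end Step

section Chain

variable {U : Type} [MetricSpace U]

lemma pairOK_comm {p q : U × U} (h : PairOK p q) : PairOK q p := by
  obtain ⟨h1, h2⟩ := h
  exact ⟨by rw [dist_comm q.2 p.2, dist_comm q.1 p.1]; exact h1,
    by rw [dist_comm q.1 p.1, dist_comm q.2 p.2]; exact h2⟩

lemma pairOK_self (p : U × U) : PairOK p p := by
  constructor <;> rw [dist_self, dist_self] <;> norm_num

/-- The key one-point extension step (backward direction). -/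
lemma step_back (hU : IsUrysohn U) (x : U) (r : ℝ)
    (L : List (U × U)) (hL : L ≠ [])
    (hOK : ∀ p ∈ L, ∀ q ∈ L, PairOK p q) (hD : ∀ p ∈ L, PairDisp x r p) (w : U) :
    ∃ z : U, (∀ p ∈ L, PairOK (z, w) p) ∧ PairDisp x r (z, w) := by
  have hL' : L.map Prod.swap ≠ [] := by
    simpa using hL
  have hOK' : ∀ p ∈ L.map Prod.swap, ∀ q ∈ L.map Prod.swap, PairOK p q := by
    intro p hp q hq
    obtain ⟨p', hp', rfl⟩ := List.mem_map.1 hp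
    obtain ⟨q', hq', rfl⟩ := List.mem_map.1 hq
    exact pairOK_swap (hOK p' hp' q' hq')
  have hD' : ∀ p ∈ L.map Prod.swap, PairDisp x r p := by
    intro p hp
    obtain ⟨p', hp', rfl⟩ := List.mem_map.1 hp
    exact pairDisp_swap (hD p' hp')
  obtain ⟨z, hz1, hz2⟩ := step_forth hU x r (L.map Prod.swap) hL' hOK' hD' w
  refine ⟨z, fun p hp => ?_, ?_⟩
  · have := hz1 p.swap (List.mem_map.2 ⟨p, hp, rfl⟩)
    have h2 := pairOK_swap this
    rw [Prod.swap_swap] at h2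
    exact h2
  · have h2 := pairDisp_swap hz2
    exact h2

/-- Goodness of a finite stage of the construction. -/
def Good (x : U) (r : ℝ) (L : List (U × U)) : Prop :=
  L ≠ [] ∧ (∀ p ∈ L, ∀ q ∈ L, PairOK p q) ∧ (∀ p ∈ L, PairDisp x r p)

/-- The back-and-forth chain of finite partial 2-bilipschitz maps. -/
noncomputable def urychain (hU : IsUrysohn U) (x u v : U) (r : ℝ) (e : ℕ → U) :
    ℕ → List (U × U)
  | 0 => [(u, v)]
  | (n + 1) =>
    let L := urychain hU x u v r e n
    if h : Good x r L then
      if Even n then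
        (e (n / 2),
          Classical.choose (step_forth hU x r L h.1 h.2.1 h.2.2 (e (n / 2)))) :: L
      else
        (Classical.choose (step_back hU x r L h.1 h.2.1 h.2.2 (e (n / 2))),
          e (n / 2)) :: L
    else L

lemma good_cons {x : U} {r : ℝ} {L : List (U × U)} {p : U × U}
    (hG : Good x r L) (h1 : ∀ q ∈ L, PairOK p q) (h2 : PairDisp x r p) :
    Good x r (p :: L) := by
  refine ⟨List.cons_ne_nil _ _, ?_, ?_⟩
  · intro a ha b hb
    rcases List.mem_cons.1 ha with ha' | ha'
    · subst ha'
      rcases List.mem_cons.1 hb with hb' | hb'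
      · subst hb'
        exact pairOK_self _
      · exact h1 b hb'
    · rcases List.mem_cons.1 hb with hb' | hb'
      · subst hb'
        exact pairOK_comm (h1 a ha')
      · exact hG.2.1 a ha' b hb'
  · intro a ha
    rcases List.mem_cons.1 ha with rfl | ha
    · exact h2
    · exact hG.2.2 a ha

lemma urychain_good (hU : IsUrysohn U) (x u v : U) (r : ℝ) (e : ℕ → U)
    (hbase : PairDisp x r (u, v)) :
    ∀ n, Good x r (urychain hU x u v r e n) := by
  intro n
  induction n with
  | zero =>
    refine ⟨List.cons_ne_nil _ _, ?_, ?_⟩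
    · intro p hp q hq
      simp only [urychain, List.mem_singleton] at hp hq
      subst hp; subst hq
      exact pairOK_self _
    · intro p hp
      simp only [urychain, List.mem_singleton] at hp
      subst hp
      exact hbase
  | succ n ih =>
    rw [urychain]
    rw [dif_pos ih]
    by_cases hev : Even n
    · rw [if_pos hev]
      have hspec := Classical.choose_spec
        (step_forth hU x r (urychain hU x u v r e n) ih.1 ih.2.1 ih.2.2 (e (n / 2)))
      exact good_cons ih hspec.1 hspec.2
    · rw [if_neg hev]
      have hspec := Classical.choose_spec
        (step_back hU x r (urychain hU x u v r e n) ih.1 ih.2.1 ih.2.2 (e (n / 2)))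
      exact good_cons ih hspec.1 hspec.2

lemma urychain_mono (hU : IsUrysohn U) (x u v : U) (r : ℝ) (e : ℕ → U) {m n : ℕ}
    (h : m ≤ n) {p : U × U} (hp : p ∈ urychain hU x u v r e m) :
    p ∈ urychain hU x u v r e n := by
  induction n with
  | zero =>
    rw [Nat.le_zero.1 h] at hp
    exact hp
  | succ n ih =>
    rcases Nat.lt_succ_iff_lt_or_eq.1 (Nat.lt_succ_of_le h) with h' | rfl
    · have hmem := ih (Nat.lt_succ_iff.1 h')
      rw [urychain]
      split
      · split <;> exact List.mem_cons_of_mem _ hmem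
      · exact hmem
    · exact hp

end Chain

section Hit

variable {U : Type} [MetricSpace U]

lemma urychain_hit_forth' (hU : IsUrysohn U) (x u v : U) (r : ℝ) (e : ℕ → U)
    (hbase : PairDisp x r (u, v)) (n : ℕ) (hev : Even n) :
    ∃ w, (e (n / 2), w) ∈ urychain hU x u v r e (n + 1) := by
  have hg := urychain_good hU x u v r e hbase n
  rw [urychain, dif_pos hg, if_pos hev]
  exact ⟨_, List.mem_cons_self⟩

lemma urychain_hit_back' (hU : IsUrysohn U) (x u v : U) (r : ℝ) (e : ℕ → U)
    (hbase : PairDisp x r (u, v)) (n : ℕ) (hodd : ¬ Even n) :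
    ∃ z, (z, e (n / 2)) ∈ urychain hU x u v r e (n + 1) := by
  have hg := urychain_good hU x u v r e hbase n
  rw [urychain, dif_pos hg, if_neg hodd]
  exact ⟨_, List.mem_cons_self⟩

lemma urychain_hit_forth (hU : IsUrysohn U) (x u v : U) (r : ℝ) (e : ℕ → U)
    (hbase : PairDisp x r (u, v)) (k : ℕ) :
    ∃ w, (e k, w) ∈ urychain hU x u v r e (2 * k + 1) := by
  obtain ⟨w, hw⟩ := urychain_hit_forth' hU x u v r e hbase (2 * k) (even_two_mul k)
  rw [show 2 * k / 2 = k by omega] at hw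
  exact ⟨w, hw⟩

lemma urychain_hit_back (hU : IsUrysohn U) (x u v : U) (r : ℝ) (e : ℕ → U)
    (hbase : PairDisp x r (u, v)) (k : ℕ) :
    ∃ z, (z, e k) ∈ urychain hU x u v r e (2 * k + 1 + 1) := by
  have hodd : ¬ Even (2 * k + 1) := by
    rintro ⟨c, hc⟩
    omega
  obtain ⟨z, hz⟩ := urychain_hit_back' hU x u v r e hbase (2 * k + 1) hodd
  rw [show (2 * k + 1) / 2 = k by omega] at hz
  exact ⟨z, hz⟩

lemma urychain_base (hU : IsUrysohn U) (x u v : U) (r : ℝ) (e : ℕ → U) :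
    (u, v) ∈ urychain hU x u v r e 0 := by
  rw [urychain]
  exact List.mem_singleton.2 rfl

end Hit

open Filter Topology

/-- Two points of `B(x, r/15)` can be matched by a 2-bilipschitz bijection of
the Urysohn space supported inside `B(x,r)`. -/
theorem two_bilipschitz_move (U : Type) [MetricSpace U] (hU : IsUrysohn U)
    (x u v : U) (r : ℝ) (hr : 0 < r)
    (hu : u ∈ ball x (r / 15)) (hv : v ∈ ball x (r / 15)) :
    ∃ g : U → U, Function.Bijective g ∧ BilipschitzOn 2 g Set.univ ∧
      g u = v ∧ ∀ z ∉ ball x r, g z = z := by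
  classical
  haveI hcomp : CompleteSpace U := hU.1
  haveI hsep : TopologicalSpace.SeparableSpace U := hU.2.1
  haveI : Nonempty U := ⟨x⟩
  set e : ℕ → U := TopologicalSpace.denseSeq U with he_def
  have he : DenseRange e := TopologicalSpace.denseRange_denseSeq U
  rw [mem_ball] at hu hv
  have hbase : PairDisp x r (u, v) := by
    have t1 := dist_triangle u x v
    have t2 := dist_comm x v
    have h1 : r - dist x u ≤ rho x r u := le_max_right _ _
    have h2 : r - dist x v ≤ rho x r v := le_max_right _ _
    have t3 := dist_comm x u
    have t4 := dist_comm x v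
    constructor
    · show 2 * dist u v ≤ rho x r u
      linarith
    · show 2 * dist u v ≤ rho x r v
      linarith
  -- the total graph
  set Γ : Set (U × U) := {p | ∃ n, p ∈ urychain hU x u v r e n} with hΓdef
  have hΓOK : ∀ p ∈ Γ, ∀ q ∈ Γ, PairOK p q := by
    rintro p ⟨m, hm⟩ q ⟨n, hn⟩
    have h1 := urychain_mono hU x u v r e (le_max_left m n) hm
    have h2 := urychain_mono hU x u v r e (le_max_right m n) hn
    exact (urychain_good hU x u v r e hbase (max m n)).2.1 p h1 q h2
  have hΓD : ∀ p ∈ Γ, PairDisp x r p := by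
    rintro p ⟨n, hn⟩
    exact (urychain_good hU x u v r e hbase n).2.2 p hn
  have hΓuv : (u, v) ∈ Γ := ⟨0, urychain_base hU x u v r e⟩
  have happrox1 : ∀ (ζ : U) (ε : ℝ), 0 < ε → ∃ p ∈ Γ, dist ζ p.1 < ε := by
    intro ζ ε hε
    obtain ⟨k, hk⟩ := Metric.denseRange_iff.1 he ζ ε hε
    obtain ⟨w, hw⟩ := urychain_hit_forth hU x u v r e hbase k
    exact ⟨(e k, w), ⟨2 * k + 1, hw⟩, by simpa using hk⟩
  have happrox2 : ∀ (ζ : U) (ε : ℝ), 0 < ε → ∃ p ∈ Γ, dist ζ p.2 < ε := by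
    intro ζ ε hε
    obtain ⟨k, hk⟩ := Metric.denseRange_iff.1 he ζ ε hε
    obtain ⟨z, hz⟩ := urychain_hit_back hU x u v r e hbase k
    exact ⟨(z, e k), ⟨2 * k + 1 + 1, hz⟩, by simpa using hk⟩
  have hone_div_pos : ∀ k : ℕ, (0:ℝ) < 1 / (k + 1) := by
    intro k
    positivity
  have hone_div_mono : ∀ N k : ℕ, N ≤ k → (1:ℝ) / (k + 1) ≤ 1 / (N + 1) := by
    intro N k hNk
    apply one_div_le_one_div_of_le
    · positivity
    · have : (N:ℝ) ≤ k := Nat.cast_le.2 hNk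
      linarith
  have hb0 : Tendsto (fun N : ℕ => (4:ℝ) * (1 / (N + 1))) atTop (𝓝 0) := by
    have := tendsto_one_div_add_atTop_nhds_zero_nat.const_mul (4:ℝ)
    simpa using this
  -- the limit map exists at every point
  have glim : ∀ ζ : U, ∃ γ : U,
      (∀ p ∈ Γ, dist γ p.2 ≤ 2 * dist ζ p.1 ∧ dist ζ p.1 ≤ 2 * dist γ p.2) ∧
      2 * dist ζ γ ≤ rho x r ζ := by
    intro ζ
    have hseq : ∀ k : ℕ, ∃ p ∈ Γ, dist ζ p.1 < 1 / (k + 1) :=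
      fun k => happrox1 ζ _ (hone_div_pos k)
    choose P hPmem hPd using hseq
    have hcauchy : CauchySeq (fun k => (P k).2) := by
      apply cauchySeq_of_le_tendsto_0 (fun N : ℕ => (4:ℝ) * (1 / (N + 1))) _ hb0
      intro k l N hk hl
      have h1 : dist (P k).2 (P l).2 ≤ 2 * dist (P k).1 (P l).1 :=
        (hΓOK (P k) (hPmem k) (P l) (hPmem l)).1
      have t1 := dist_triangle (P k).1 ζ (P l).1
      have t2 := dist_comm (P k).1 ζ
      have h3 := hPd k
      have h4 := hPd l
      have h5 := hone_div_mono N k hk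
      have h6 := hone_div_mono N l hl
      linarith
    obtain ⟨γ, hγ⟩ := cauchySeq_tendsto_of_complete hcauchy
    have hdistto : Tendsto (fun k => dist (P k).2 γ) atTop (𝓝 0) := by
      have := hγ.dist (tendsto_const_nhds (x := γ) (f := atTop))
      simpa using this
    refine ⟨γ, fun p hp => ⟨?_, ?_⟩, ?_⟩
    · -- dist γ p.2 ≤ 2 * dist ζ p.1
      have hk : ∀ k : ℕ, dist γ p.2 ≤ dist (P k).2 γ + 2 * (dist ζ p.1 + 1 / (k + 1)) := by
        intro k
        have h1 : dist (P k).2 p.2 ≤ 2 * dist (P k).1 p.1 :=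
          (hΓOK (P k) (hPmem k) p hp).1
        have t1 := dist_triangle γ (P k).2 p.2
        have t2 := dist_triangle (P k).1 ζ p.1
        have t3 := dist_comm (P k).1 ζ
        have t4 := dist_comm γ (P k).2
        have h3 := hPd k
        linarith
      have hlim : Tendsto (fun k : ℕ => dist (P k).2 γ + 2 * (dist ζ p.1 + 1 / (k + 1)))
          atTop (𝓝 (0 + 2 * (dist ζ p.1 + 0))) := by
        exact hdistto.add ((tendsto_const_nhds.add
          tendsto_one_div_add_atTop_nhds_zero_nat).const_mul 2)
      have := le_of_tendsto_of_tendsto' tendsto_const_nhds hlim hk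
      simpa using this
    · -- dist ζ p.1 ≤ 2 * dist γ p.2
      have hk : ∀ k, dist ζ p.1 ≤ 1 / (k + 1) + 2 * (dist (P k).2 γ + dist γ p.2) := by
        intro k
        have h1 : dist (P k).1 p.1 ≤ 2 * dist (P k).2 p.2 :=
          (hΓOK (P k) (hPmem k) p hp).2
        have t1 := dist_triangle ζ (P k).1 p.1
        have t2 := dist_triangle (P k).2 γ p.2
        have h3 := hPd k
        linarith
      have hlim : Tendsto (fun k : ℕ => 1 / ((k:ℝ) + 1) + 2 * (dist (P k).2 γ + dist γ p.2))
          atTop (𝓝 (0 + 2 * (0 + dist γ p.2))) := by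
        exact tendsto_one_div_add_atTop_nhds_zero_nat.add
          ((hdistto.add tendsto_const_nhds).const_mul 2)
      have := le_of_tendsto_of_tendsto' tendsto_const_nhds hlim hk
      simpa using this
    · -- 2 * dist ζ γ ≤ rho x r ζ
      have hk : ∀ k, 2 * dist ζ γ ≤
          3 * (1 / (k + 1)) + rho x r ζ + 2 * dist (P k).2 γ := by
        intro k
        have h3 := hPd k
        have hD := (hΓD (P k) (hPmem k)).1
        have hlip := rho_lip x r (P k).1 ζ
        have t1 := dist_triangle ζ (P k).1 γ
        have t2 := dist_triangle (P k).1 (P k).2 γ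
        have t3 := dist_comm (P k).1 ζ
        linarith
      have hlim : Tendsto (fun k : ℕ => 3 * (1 / ((k:ℝ) + 1)) + rho x r ζ + 2 * dist (P k).2 γ)
          atTop (𝓝 (3 * 0 + rho x r ζ + 2 * 0)) := by
        exact ((tendsto_one_div_add_atTop_nhds_zero_nat.const_mul 3).add
          tendsto_const_nhds).add (hdistto.const_mul 2)
      have := le_of_tendsto_of_tendsto' tendsto_const_nhds hlim hk
      simpa using this
  choose g hg1 hg2 using glim
  -- g u = v
  have hgu : g u = v := by
    have h := (hg1 u (u, v) hΓuv).1
    simp only [dist_self, mul_zero] at h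
    exact dist_le_zero.1 h
  -- bilipschitz
  have hbil : ∀ ζ ζ' : U,
      dist (g ζ) (g ζ') ≤ 2 * dist ζ ζ' ∧ dist ζ ζ' ≤ 2 * dist (g ζ) (g ζ') := by
    intro ζ ζ'
    constructor
    · apply le_of_forall_pos_le_add
      intro ε hε
      obtain ⟨p, hp, hpd⟩ := happrox1 ζ (ε / 16) (by linarith)
      obtain ⟨q, hq, hqd⟩ := happrox1 ζ' (ε / 16) (by linarith)
      have h1 := (hg1 ζ p hp).1
      have h2 := (hg1 ζ' q hq).1
      have h3 := (hΓOK p hp q hq).1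
      have t1 := dist_triangle (g ζ) p.2 (g ζ')
      have t2 := dist_triangle p.2 q.2 (g ζ')
      have t3 := dist_triangle p.1 ζ q.1
      have t4 := dist_triangle ζ ζ' q.1
      have t5 := dist_comm p.1 ζ
      have t6 := dist_comm ζ' q.1
      have t7 := dist_comm q.2 (g ζ')
      linarith
    · apply le_of_forall_pos_le_add
      intro ε hε
      obtain ⟨p, hp, hpd⟩ := happrox1 ζ (ε / 16) (by linarith)
      obtain ⟨q, hq, hqd⟩ := happrox1 ζ' (ε / 16) (by linarith)
      have h1 := (hg1 ζ p hp).1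
      have h2 := (hg1 ζ' q hq).1
      have h3 := (hΓOK p hp q hq).2
      have t1 := dist_triangle ζ p.1 ζ'
      have t2 := dist_triangle p.1 q.1 ζ'
      have t3 := dist_triangle p.2 (g ζ) q.2
      have t4 := dist_triangle (g ζ) (g ζ') q.2
      have t5 := dist_comm ζ p.1
      have t6 := dist_comm q.1 ζ'
      have t7 := dist_comm p.2 (g ζ)
      have t8 := dist_comm q.2 (g ζ')
      linarith
  -- support
  have hsupp : ∀ z ∉ ball x r, g z = z := by
    intro z hz
    rw [mem_ball] at hz
    push_neg at hz
    have hρ0 : rho x r z = 0 := by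
      have h1 : r - dist x z ≤ 0 := by
        have := dist_comm z x
        linarith
      exact max_eq_left h1
    have h2 := hg2 z
    rw [hρ0] at h2
    have h3 : dist z (g z) ≤ 0 := by linarith
    exact (dist_le_zero.1 h3).symm
  -- injective
  have hinj : Function.Injective g := by
    intro ζ ζ' h
    have := (hbil ζ ζ').2
    rw [h, dist_self, mul_zero] at this
    exact dist_le_zero.1 this
  -- surjective
  have hsurj : Function.Surjective g := by
    intro τ
    have hseq : ∀ k : ℕ, ∃ p ∈ Γ, dist τ p.2 < 1 / (k + 1) :=
      fun k => happrox2 τ _ (hone_div_pos k)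
    choose P hPmem hPd using hseq
    have hcauchy : CauchySeq (fun k => (P k).1) := by
      apply cauchySeq_of_le_tendsto_0 (fun N : ℕ => (4:ℝ) * (1 / (N + 1))) _ hb0
      intro k l N hk hl
      have h1 : dist (P k).1 (P l).1 ≤ 2 * dist (P k).2 (P l).2 :=
        (hΓOK (P k) (hPmem k) (P l) (hPmem l)).2
      have t1 := dist_triangle (P k).2 τ (P l).2
      have t2 := dist_comm (P k).2 τ
      have h3 := hPd k
      have h4 := hPd l
      have h5 := hone_div_mono N k hk
      have h6 := hone_div_mono N l hl
      linarith
    obtain ⟨ζ, hζ⟩ := cauchySeq_tendsto_of_complete hcauchy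
    refine ⟨ζ, ?_⟩
    have hdistto : Tendsto (fun k => dist ζ (P k).1) atTop (𝓝 0) := by
      have := (tendsto_const_nhds (x := ζ) (f := atTop)).dist hζ
      simpa using this
    have hk : ∀ k, dist (g ζ) τ ≤ 2 * dist ζ (P k).1 + 1 / (k + 1) := by
      intro k
      have h1 := (hg1 ζ (P k) (hPmem k)).1
      have t1 := dist_triangle (g ζ) (P k).2 τ
      have t2 := dist_comm τ (P k).2
      have h3 := hPd k
      linarith
    have hlim : Tendsto (fun k : ℕ => 2 * dist ζ (P k).1 + 1 / ((k:ℝ) + 1)) atTop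
        (𝓝 (2 * 0 + 0)) :=
      (hdistto.const_mul 2).add tendsto_one_div_add_atTop_nhds_zero_nat
    have hfin := le_of_tendsto_of_tendsto' tendsto_const_nhds hlim hk
    simp only [mul_zero, add_zero] at hfin
    exact dist_le_zero.1 hfin
  refine ⟨g, ⟨hinj, hsurj⟩, ?_, hgu, hsupp⟩
  intro a _ b _
  have h := hbil a b
  constructor
  · linarith [h.2]
  · linarith [h.1]
end

section
/- Define K̂ : (0,∞) → ℕ by K̂(t) = 2^{⌊16t⌋+1}; K̂ is increasing, and the following holds. If L is a line segment in the Urysohn space 𝕌 with endpoints x and y, and r > 0, then there is a bilipschitz bijection g : 𝕌 → 𝕌 such that g(x) = y, g is the identity on 𝕌 ∖ B(L,r) (the open r-neighborhood of L), and g is K̂(length(L)/r)-bilipschitz. -/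
open Metric Set
open scoped Classical

/-- `K̂(t) = 2^(⌊16t⌋ + 1)`. -/
noncomputable def Khat (t : ℝ) : ℕ := 2 ^ (Nat.floor (16 * t) + 1)

namespace SegMove

variable {U : Type} [MetricSpace U]

/-- One-point extension: realize a finite consistent distance assignment. -/
lemma realize (hU : IsUrysohn U) (L : List (U × ℝ))
    (hpair : ∀ a ∈ L, ∀ b ∈ L, |a.2 - b.2| ≤ dist a.1 b.1 ∧ dist a.1 b.1 ≤ a.2 + b.2) :
    ∃ w : U, ∀ a ∈ L, dist w a.1 = a.2 := by
  classical
  have hnn : ∀ a ∈ L, 0 ≤ a.2 := by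
    intro a ha
    have := (hpair a ha a ha).2
    simp at this; linarith
  set n := L.length with hn
  set V := Fin n → ℝ with hV
  set P : Fin n → V := fun i j => dist (L.get i).1 (L.get j).1 with hP
  set F : V := fun j => (L.get j).2 with hF
  -- distances in V
  have hPP : ∀ i j, dist (P i) (P j) = dist (L.get i).1 (L.get j).1 := by
    intro i j
    apply le_antisymm
    · refine (dist_pi_le_iff dist_nonneg).2 fun k => ?_
      rw [Real.dist_eq]
      exact abs_dist_sub_le _ _ _
    · have := dist_le_pi_dist (P i) (P j) j
      rwa [Real.dist_eq, show P i j = dist (L.get i).1 (L.get j).1 from rfl,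
        show P j j = dist (L.get j).1 (L.get j).1 from rfl, dist_self,
        sub_zero, abs_of_nonneg dist_nonneg] at this
  have hFP : ∀ i, dist F (P i) = (L.get i).2 := by
    intro i
    have hi : (L.get i) ∈ L := L.get_mem _
    apply le_antisymm
    · refine (dist_pi_le_iff (hnn _ hi)).2 fun k => ?_
      have hk : (L.get k) ∈ L := L.get_mem _
      have h1 := (hpair _ hk _ hi).1
      have h2 := (hpair _ hk _ hi).2
      rw [Real.dist_eq, show F k = (L.get k).2 from rfl,
        show P i k = dist (L.get i).1 (L.get k).1 from rfl, abs_le]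
      rw [abs_le] at h1
      rw [dist_comm] at h2
      have hc : dist (L.get i).1 (L.get k).1 = dist (L.get k).1 (L.get i).1 := dist_comm _ _
      constructor <;> linarith
    · have := dist_le_pi_dist F (P i) i
      rwa [Real.dist_eq, show F i = (L.get i).2 from rfl,
        show P i i = dist (L.get i).1 (L.get i).1 from rfl, dist_self,
        sub_zero, abs_of_nonneg (hnn _ hi)] at this
  -- the finite configuration space
  set S : Set V := insert F (Set.range P) with hS
  have hSfin : S.Finite := (Set.finite_range P).insert F
  haveI : Finite ↥S := hSfin.to_subtype
  haveI : TopologicalSpace.SeparableSpace ↥S := ⟨⟨Set.univ, Set.countable_univ, dense_univ⟩⟩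
  obtain ⟨f, hf⟩ := hU.2.2.1 ↥S
  set y : Fin n → U := fun i => f ⟨P i, Set.mem_insert_of_mem _ ⟨i, rfl⟩⟩ with hy
  set z : U := f ⟨F, Set.mem_insert _ _⟩ with hz
  have hdy : ∀ i j, dist (y i) (y j) = dist (L.get i).1 (L.get j).1 := by
    intro i j; rw [hy]; simp only []
    rw [hf.dist_eq, Subtype.dist_eq, hPP]
  have hdz : ∀ i, dist z (y i) = (L.get i).2 := by
    intro i; rw [hy, hz]; simp only []
    rw [hf.dist_eq, Subtype.dist_eq, hFP]
  -- homogeneity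
  set A : Set U := Set.range y with hA
  set m : U → U := fun v => if h : ∃ i, y i = v then (L.get h.choose).1 else v with hm
  have hmy : ∀ i, m (y i) = (L.get i).1 := by
    intro i
    have h : ∃ j, y j = y i := ⟨i, rfl⟩
    rw [hm]; simp only [dif_pos h]
    have := h.choose_spec
    have hd : dist (L.get h.choose).1 (L.get i).1 = 0 := by
      rw [← hdy]; rw [this]; exact dist_self _
    exact eq_of_dist_eq_zero hd
  have hiso : ∀ u ∈ A, ∀ v ∈ A, dist (m u) (m v) = dist u v := by
    rintro u ⟨i, rfl⟩ v ⟨j, rfl⟩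
    rw [hmy, hmy, hdy]
  obtain ⟨g, hg⟩ := hU.2.2.2 A m (Set.finite_range y) hiso
  refine ⟨g z, ?_⟩
  intro a ha
  obtain ⟨i, hi⟩ := List.mem_iff_get.1 ha
  have : g (y i) = (L.get i).1 := by rw [hg (y i) ⟨i, rfl⟩, hmy]
  calc dist (g z) a.1 = dist (g z) (g (y i)) := by rw [this, hi]
    _ = dist z (y i) := g.dist_eq _ _
    _ = a.2 := by rw [hdz, hi]

def PairsP (l : List (U × U)) : Prop :=
  ∀ a ∈ l, ∀ b ∈ l, dist a.1 b.1 ≤ 2 * dist a.2 b.2 ∧ dist a.2 b.2 ≤ 2 * dist a.1 b.1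

def DispP (p : U) (R : ℝ) (l : List (U × U)) : Prop :=
  ∀ a ∈ l, 8 * dist a.1 a.2 ≤ max (R - dist a.1 p) 0 ∧ 8 * dist a.1 a.2 ≤ max (R - dist a.2 p) 0

lemma ext_step (hU : IsUrysohn U) (p : U) (R : ℝ) (l : List (U × U))
    (hl : PairsP l) (hd : DispP p R l) (h0 : ∃ a ∈ l, a.2 = p) (z : U) :
    ∃ w : U, PairsP ((z, w) :: l) ∧ DispP p R ((z, w) :: l) := by
  classical
  obtain ⟨a0, ha0l, ha0p⟩ := h0
  set S : Finset (U × U) := l.toFinset with hSdef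
  have hSne : S.Nonempty := ⟨a0, List.mem_toFinset.2 ha0l⟩
  have hmemS : ∀ a ∈ S, a ∈ l := fun a ha => List.mem_toFinset.1 ha
  have ha0S : a0 ∈ S := List.mem_toFinset.2 ha0l
  set s : ℝ := max (R - dist z p) 0 with hsdef
  set D : ℝ := s / 8 with hDdef
  have hs0 : 0 ≤ s := le_max_right _ _
  have hD0 : 0 ≤ D := by rw [hDdef]; linarith
  -- basic displacement bound relative to z
  have hm : ∀ a ∈ S, 8 * dist a.1 a.2 ≤ s + dist z a.1 := by
    intro a ha
    have h1 := (hd a (hmemS a ha)).1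
    have ht : dist z p ≤ dist z a.1 + dist a.1 p := dist_triangle _ _ _
    have : max (R - dist a.1 p) 0 ≤ s + dist z a.1 := by
      apply max_le
      · have : R - dist z p ≤ s := le_max_left _ _
        linarith
      · have : (0:ℝ) ≤ dist z a.1 := dist_nonneg
        linarith
    linarith
  set lo : U × U → ℝ := fun a => max (dist z a.1 / 2) (dist z a.2 - D) with hlo
  set hi : U × U → ℝ := fun a => min (2 * dist z a.1) (dist z a.2 + D) with hhi
  -- C2 : dx/2 ≤ dy + D  and C3 : dy ≤ (9/8) dx + D
  have hC2 : ∀ a ∈ S, dist z a.1 / 2 ≤ dist z a.2 + D := by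
    intro a ha
    have ht : dist z a.1 ≤ dist z a.2 + dist a.1 a.2 := by
      rw [dist_comm a.1 a.2]; exact dist_triangle _ _ _
    have := hm a ha
    have hx0 : (0:ℝ) ≤ dist z a.1 := dist_nonneg
    linarith
  have hC3 : ∀ a ∈ S, dist z a.2 ≤ (9/8) * dist z a.1 + D := by
    intro a ha
    have ht : dist z a.2 ≤ dist z a.1 + dist a.1 a.2 := dist_triangle _ _ _
    have := hm a ha
    linarith
  have hF1 : ∀ a ∈ S, lo a ≤ hi a := by
    intro a ha
    have h2 := hC2 a ha
    have h3 := hC3 a ha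
    have hx0 : (0:ℝ) ≤ dist z a.1 := dist_nonneg
    apply max_le <;> apply le_min <;> linarith
  have hF2 : ∀ a ∈ S, ∀ b ∈ S, lo a ≤ hi b + dist a.2 b.2 := by
    intro a ha b hb
    have h2a := hC2 a ha
    have h3b := hC3 b hb
    have hxb0 : (0:ℝ) ≤ dist z b.1 := dist_nonneg
    have htx : dist z a.1 ≤ dist z b.1 + dist a.1 b.1 := by
      rw [dist_comm a.1 b.1]; exact dist_triangle _ _ _
    have hby : dist a.1 b.1 ≤ 2 * dist a.2 b.2 := (hl a (hmemS a ha) b (hmemS b hb)).1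
    have hty : dist z a.2 ≤ dist z b.2 + dist a.2 b.2 := by
      rw [dist_comm a.2 b.2]; exact dist_triangle _ _ _
    have key : lo a ≤ min (2 * dist z b.1 + dist a.2 b.2) (dist z b.2 + D + dist a.2 b.2) := by
      apply max_le <;> apply le_min <;> linarith
    calc lo a ≤ min (2 * dist z b.1 + dist a.2 b.2) (dist z b.2 + D + dist a.2 b.2) := key
      _ = hi b + dist a.2 b.2 := by rw [hhi]; simp only []; rw [min_add_add_right]
  have hF3 : ∀ a ∈ S, ∀ b ∈ S, dist a.2 b.2 ≤ hi a + hi b := by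
    intro a ha b hb
    have hya : dist z a.2 ≤ (9/8) * dist z a.1 + D := hC3 a ha
    have hyb : dist z b.2 ≤ (9/8) * dist z b.1 + D := hC3 b hb
    have he1 : dist a.2 b.2 ≤ 2 * dist a.1 b.1 := (hl a (hmemS a ha) b (hmemS b hb)).2
    have he2 : dist a.1 b.1 ≤ dist z a.1 + dist z b.1 := by
      rw [dist_comm z a.1] at *; exact dist_triangle _ _ _
    have he3 : dist a.2 b.2 ≤ dist z a.2 + dist z b.2 := by
      rw [dist_comm z a.2] at *; exact dist_triangle _ _ _
    have hxa0 : (0:ℝ) ≤ dist z a.1 := dist_nonneg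
    have hxb0 : (0:ℝ) ≤ dist z b.1 := dist_nonneg
    rcases min_cases (2 * dist z a.1) (dist z a.2 + D) with ⟨haeq, _⟩ | ⟨haeq, _⟩ <;>
      rcases min_cases (2 * dist z b.1) (dist z b.2 + D) with ⟨hbeq, _⟩ | ⟨hbeq, _⟩ <;>
      rw [hhi] <;> simp only [] <;> rw [haeq, hbeq] <;> linarith
  set sig : U × U → ℝ := fun a => S.inf' hSne (fun b => hi b + dist a.2 b.2) with hsig
  set lam : U × U → ℝ := fun a =>
    S.sup' hSne (fun b => max (lo b - dist a.2 b.2) (dist a.2 b.2 - hi b)) with hlam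
  set rho : U × U → ℝ := fun a => min (sig a) (max (dist z a.2) (lam a)) with hrho
  have hsig_le : ∀ a ∈ S, sig a ≤ hi a := by
    intro a ha
    have := Finset.inf'_le (f := fun b => hi b + dist a.2 b.2) ha
    simp only [dist_self, add_zero] at this
    exact this
  have hsig_ge : ∀ a ∈ S, lo a ≤ sig a :=
    fun a ha => Finset.le_inf' hSne _ (fun b hb => hF2 a ha b hb)
  have hsig_forced : ∀ a ∈ S, ∀ c ∈ S, dist a.2 c.2 - hi c ≤ sig a := by
    intro a ha c hc
    apply Finset.le_inf' hSne
    intro b hb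
    have := hF3 c hc b hb
    have ht : dist a.2 c.2 ≤ dist a.2 b.2 + dist b.2 c.2 := dist_triangle _ _ _
    have hcm : dist b.2 c.2 = dist c.2 b.2 := dist_comm _ _
    linarith
  have hlam_ge : ∀ a ∈ S, ∀ c ∈ S,
      max (lo c - dist a.2 c.2) (dist a.2 c.2 - hi c) ≤ lam a :=
    fun a _ c hc =>
      Finset.le_sup' (f := fun b => max (lo b - dist a.2 b.2) (dist a.2 b.2 - hi b)) hc
  have hlam_ge_lo : ∀ a ∈ S, lo a ≤ lam a := by
    intro a ha
    have := hlam_ge a ha a ha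
    simp only [dist_self, sub_zero, zero_sub] at this
    exact le_trans (le_max_left _ _) this
  have hrho_le_hi : ∀ a ∈ S, rho a ≤ hi a :=
    fun a ha => le_trans (min_le_left _ _) (hsig_le a ha)
  have hrho_ge_lo : ∀ a ∈ S, lo a ≤ rho a := by
    intro a ha
    exact le_min (hsig_ge a ha) (le_trans (hlam_ge_lo a ha) (le_max_right _ _))
  have hlo_nn : ∀ a : U × U, 0 ≤ lo a := by
    intro a
    exact le_trans (by positivity) (le_max_left (dist z a.1 / 2) _)
  have hrho_nn : ∀ a ∈ S, 0 ≤ rho a := fun a ha => le_trans (hlo_nn a) (hrho_ge_lo a ha)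
  have hrho_forced : ∀ a ∈ S, ∀ c ∈ S, dist a.2 c.2 - hi c ≤ rho a := by
    intro a ha c hc
    refine le_min (hsig_forced a ha c hc) ?_
    exact le_trans (le_trans (le_max_right _ _) (hlam_ge a ha c hc)) (le_max_right _ _)
  -- Lipschitz property of rho
  have hrho_lip : ∀ a ∈ S, ∀ b ∈ S, rho a ≤ rho b + dist a.2 b.2 := by
    intro a ha b hb
    have hsigl : sig a ≤ sig b + dist a.2 b.2 := by
      obtain ⟨c, hc, hceq⟩ := Finset.exists_mem_eq_inf' hSne (fun c => hi c + dist b.2 c.2)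
      have h1 := Finset.inf'_le (f := fun c => hi c + dist a.2 c.2) hc
      have ht : dist a.2 c.2 ≤ dist a.2 b.2 + dist b.2 c.2 := dist_triangle _ _ _
      have hsb : sig b = hi c + dist b.2 c.2 := hceq
      calc sig a ≤ hi c + dist a.2 c.2 := h1
        _ ≤ sig b + dist a.2 b.2 := by rw [hsb]; linarith
    have hlaml : lam a ≤ lam b + dist a.2 b.2 := by
      apply Finset.sup'_le
      intro c hc
      have h1 : max (lo c - dist b.2 c.2) (dist b.2 c.2 - hi c) ≤ lam b := hlam_ge b hb c hc
      have ht : dist a.2 c.2 ≤ dist a.2 b.2 + dist b.2 c.2 := dist_triangle _ _ _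
      have ht2 : dist b.2 c.2 ≤ dist b.2 a.2 + dist a.2 c.2 := dist_triangle _ _ _
      have hcm : dist b.2 a.2 = dist a.2 b.2 := dist_comm _ _
      have hmax1 : lo c - dist b.2 c.2 ≤ lam b := le_trans (le_max_left _ _) h1
      have hmax2 : dist b.2 c.2 - hi c ≤ lam b := le_trans (le_max_right _ _) h1
      apply max_le <;> linarith
    have hdyl : dist z a.2 ≤ dist z b.2 + dist a.2 b.2 := by
      rw [dist_comm a.2 b.2]; exact dist_triangle _ _ _
    have : max (dist z a.2) (lam a) ≤ max (dist z b.2) (lam b) + dist a.2 b.2 := by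
      apply max_le
      · exact le_trans hdyl (by have := le_max_left (dist z b.2) (lam b); linarith)
      · exact le_trans hlaml (by have := le_max_right (dist z b.2) (lam b); linarith)
    refine le_trans (min_le_min hsigl this) ?_
    rw [min_add_add_right]
  -- sum property
  have hrho_sum : ∀ a ∈ S, ∀ b ∈ S, dist a.2 b.2 ≤ rho a + rho b := by
    intro a ha b hb
    rcases min_cases (sig a) (max (dist z a.2) (lam a)) with ⟨haeq, _⟩ | ⟨haeq, hax⟩
    · -- rho a = sig a, use attainment
      obtain ⟨c, hc, hceq⟩ := Finset.exists_mem_eq_inf' hSne (fun c => hi c + dist a.2 c.2)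
      have hforced : dist b.2 c.2 - hi c ≤ rho b := hrho_forced b hb c hc
      have ht : dist a.2 b.2 ≤ dist a.2 c.2 + dist b.2 c.2 := by
        rw [dist_comm b.2 c.2]; exact dist_triangle _ _ _
      have hra : rho a = hi c + dist a.2 c.2 := by rw [hrho]; simp only []; rw [haeq]; exact hceq
      linarith
    · rcases min_cases (sig b) (max (dist z b.2) (lam b)) with ⟨hbeq, _⟩ | ⟨hbeq, hbx⟩
      · obtain ⟨c, hc, hceq⟩ := Finset.exists_mem_eq_inf' hSne (fun c => hi c + dist b.2 c.2)
        have hforced : dist a.2 c.2 - hi c ≤ rho a := hrho_forced a ha c hc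
        have ht : dist a.2 b.2 ≤ dist a.2 c.2 + dist b.2 c.2 := by
          rw [dist_comm b.2 c.2]; exact dist_triangle _ _ _
        have hrb : rho b = hi c + dist b.2 c.2 := by rw [hrho]; simp only []; rw [hbeq]; exact hceq
        linarith
      · have hra : dist z a.2 ≤ rho a := by
          rw [hrho]; simp only []; rw [haeq]; exact le_max_left _ _
        have hrb : dist z b.2 ≤ rho b := by
          rw [hrho]; simp only []; rw [hbeq]; exact le_max_left _ _
        have he : dist a.2 b.2 ≤ dist z a.2 + dist z b.2 := by
          rw [dist_comm z a.2]; exact dist_triangle _ _ _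
        linarith
  -- deviation of hi from dy
  have hyhi : ∀ c ∈ S, dist z c.2 - hi c ≤ D := by
    intro c hc
    have h1 := hm c hc
    have ht : dist z c.2 ≤ dist z c.1 + dist c.1 c.2 := dist_triangle _ _ _
    have hx0 : (0:ℝ) ≤ dist z c.1 := dist_nonneg
    rcases min_cases (2 * dist z c.1) (dist z c.2 + D) with ⟨heq, _⟩ | ⟨heq, _⟩ <;>
      rw [hhi] <;> simp only [] <;> rw [heq] <;> linarith
  -- P4 : |rho a - dist z a.2| ≤ D
  have hP4 : ∀ a ∈ S, |rho a - dist z a.2| ≤ D := by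
    intro a ha
    rw [abs_le]
    constructor
    · have h1 : dist z a.2 - D ≤ lo a := le_max_right _ _
      have := hrho_ge_lo a ha
      linarith
    · have h1 : rho a ≤ max (dist z a.2) (lam a) := min_le_right _ _
      have h2 : lam a ≤ dist z a.2 + D := by
        apply Finset.sup'_le
        intro c hc
        have hty : dist z c.2 ≤ dist z a.2 + dist a.2 c.2 := dist_triangle _ _ _
        have hty2 : dist a.2 c.2 ≤ dist z a.2 + dist z c.2 := by
          rw [dist_comm z a.2]; exact dist_triangle _ _ _
        have hc2 := hC2 c hc
        have hyc := hyhi c hc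
        apply max_le
        · rw [sub_le_iff_le_add]
          apply max_le <;> linarith
        · linarith
      have h3 : max (dist z a.2) (lam a) ≤ dist z a.2 + D := max_le (by linarith) h2
      linarith
  set rz : ℝ := S.sup' hSne (fun c => |rho c - dist z c.2|) with hrz
  have hrz_le_D : rz ≤ D := Finset.sup'_le _ _ hP4
  have hrz_ge : ∀ a ∈ S, |rho a - dist z a.2| ≤ rz := by
    intro a ha
    rw [hrz]
    exact Finset.le_sup' (fun c => |rho c - dist z c.2|) ha
  have hrz_nn : 0 ≤ rz := le_trans (abs_nonneg _) (hrz_ge a0 ha0S)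
  have hP6a : ∀ a ∈ S, dist z a.2 ≤ rho a + rz := by
    intro a ha
    have h1 := hrz_ge a ha
    have h2 := neg_abs_le (rho a - dist z a.2)
    linarith
  have hP6b : ∀ a ∈ S, |rho a - rz| ≤ dist z a.2 := by
    intro a ha
    rw [abs_le]
    constructor
    · have : rz ≤ rho a + dist z a.2 := by
        apply Finset.sup'_le
        intro c hc
        rw [abs_le]
        have hlip := hrho_lip c hc a ha
        have hsum := hrho_sum c hc a ha
        have ht1 : dist c.2 a.2 ≤ dist z c.2 + dist z a.2 := by
          rw [dist_comm z c.2]; exact dist_triangle _ _ _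
        have ht2 : dist z c.2 ≤ dist z a.2 + dist a.2 c.2 := dist_triangle _ _ _
        have hcm : dist c.2 a.2 = dist a.2 c.2 := dist_comm _ _
        constructor <;> linarith
      linarith
    · have h1 := hrz_ge a ha
      have h2 := le_abs_self (rho a - dist z a.2)
      linarith
  -- P5 : anchor bound
  have hP5 : dist z p < R → ∀ j ∈ S, 8 * |rho j - dist z j.2| ≤ R - rho a0 := by
    intro hzR j hj
    have hsval : s = R - dist z p := max_eq_left (by linarith)
    have hbase : rho a0 ≤ dist z p + D := by
      have h1 := hrho_le_hi a0 ha0S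
      have h2 : hi a0 ≤ dist z a0.2 + D := min_le_right _ _
      rw [ha0p] at h2
      linarith
    have hRr : 0 ≤ R - rho a0 := by
      have : D ≤ s := by rw [hDdef]; linarith
      linarith
    have hA : 8 * (dist z j.2 - rho j) ≤ R - rho a0 := by
      rcases le_or_gt (dist z j.2 - rho j) 0 with hneg | hpos
      · linarith
      · have hrj : rho j = sig j := by
          rcases min_cases (sig j) (max (dist z j.2) (lam j)) with ⟨heq, _⟩ | ⟨heq, hge⟩
          · exact heq
          · exfalso
            have hdd : dist z j.2 ≤ rho j := by
              rw [hrho]; simp only []; rw [heq]; exact le_max_left _ _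
            linarith
        obtain ⟨c, hc, hceq⟩ := Finset.exists_mem_eq_inf' hSne (fun c => hi c + dist j.2 c.2)
        have hsigj : sig j = hi c + dist j.2 c.2 := hceq
        have hyy : dist z j.2 ≤ dist z c.2 + dist j.2 c.2 := by
          rw [dist_comm j.2 c.2]; exact dist_triangle _ _ _
        have hval : dist z j.2 - rho j ≤ dist z c.2 - hi c := by
          rw [hrj, hsigj]; linarith
        rcases min_cases (2 * dist z c.1) (dist z c.2 + D) with ⟨heqc, _⟩ | ⟨heqc, _⟩
        · have hic : hi c = 2 * dist z c.1 := by rw [hhi]; exact heqc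
          have h1 : dist z j.2 - rho j ≤ dist z c.2 - 2 * dist z c.1 := by
            rw [hic] at hval; linarith
          have htc : dist z c.2 ≤ dist z c.1 + dist c.1 c.2 := dist_triangle _ _ _
          have hx0 : (0:ℝ) ≤ dist z c.1 := dist_nonneg
          have hmcpos : 0 < dist c.1 c.2 := by linarith
          have hdc : 8 * dist c.1 c.2 ≤ R - dist c.2 p := by
            have h2 := (hd c (hmemS c hc)).2
            rcases max_cases (R - dist c.2 p) 0 with ⟨heq2, _⟩ | ⟨heq2, _⟩
            · rw [heq2] at h2; exact h2
            · rw [heq2] at h2; linarith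
          have hlipr : rho a0 ≤ rho c + dist a0.2 c.2 := hrho_lip a0 ha0S c hc
          have hrc : rho c ≤ 2 * dist z c.1 := by
            have h3 := hrho_le_hi c hc
            rw [hic] at h3; exact h3
          have hpc : dist a0.2 c.2 = dist c.2 p := by rw [ha0p, dist_comm]
          linarith
        · have hic : hi c = dist z c.2 + D := by rw [hhi]; exact heqc
          have h1 : dist z j.2 - rho j ≤ -D := by rw [hic] at hval; linarith
          linarith
    have hB : 8 * (rho j - dist z j.2) ≤ R - rho a0 := by
      rcases le_or_gt (rho j - dist z j.2) 0 with hneg | hpos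
      · linarith
      · have hrj : rho j ≤ lam j := by
          have h1 : rho j ≤ max (dist z j.2) (lam j) := min_le_right _ _
          rcases max_cases (dist z j.2) (lam j) with ⟨heq, _⟩ | ⟨heq, _⟩
          · exfalso; rw [heq] at h1; linarith
          · rw [heq] at h1; exact h1
        obtain ⟨c, hc, hceq⟩ := Finset.exists_mem_eq_sup' hSne
          (fun c => max (lo c - dist j.2 c.2) (dist j.2 c.2 - hi c))
        have hlamj : lam j = max (lo c - dist j.2 c.2) (dist j.2 c.2 - hi c) := hceq
        have hyy : dist z c.2 ≤ dist z j.2 + dist j.2 c.2 := dist_triangle _ _ _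
        have hyy2 : dist j.2 c.2 ≤ dist z j.2 + dist z c.2 := by
          rw [dist_comm z j.2]; exact dist_triangle _ _ _
        have htc : dist z c.2 ≤ dist z c.1 + dist c.1 c.2 := dist_triangle _ _ _
        have htc2 : dist z c.1 ≤ dist z c.2 + dist c.1 c.2 := by
          rw [dist_comm c.1 c.2]; exact dist_triangle _ _ _
        have hx0 : (0:ℝ) ≤ dist z c.1 := dist_nonneg
        have hlipr : rho a0 ≤ rho c + dist a0.2 c.2 := hrho_lip a0 ha0S c hc
        have hpc : dist a0.2 c.2 = dist c.2 p := by rw [ha0p, dist_comm]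
        have hdc : 0 < dist c.1 c.2 → 8 * dist c.1 c.2 ≤ R - dist c.2 p := by
          intro hmcpos
          have h2 := (hd c (hmemS c hc)).2
          rcases max_cases (R - dist c.2 p) 0 with ⟨heq2, _⟩ | ⟨heq2, _⟩
          · rw [heq2] at h2; exact h2
          · rw [heq2] at h2; linarith
        rcases max_cases (lo c - dist j.2 c.2) (dist j.2 c.2 - hi c) with ⟨heqm, _⟩ | ⟨heqm, _⟩
        · -- lam j = lo c - dist j.2 c.2
          have hval : rho j - dist z j.2 ≤ lo c - dist z c.2 := by
            rw [heqm] at hlamj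
            have h9 : rho j ≤ lo c - dist j.2 c.2 := hlamj ▸ hrj
            linarith
          rcases max_cases (dist z c.1 / 2) (dist z c.2 - D) with ⟨heql, _⟩ | ⟨heql, _⟩
          · have hlc : lo c = dist z c.1 / 2 := by rw [hlo]; exact heql
            have h1 : rho j - dist z j.2 ≤ dist z c.1 / 2 - dist z c.2 := by
              rw [hlc] at hval; linarith
            have hmcpos : 0 < dist c.1 c.2 := by linarith
            have hmcge : dist z c.1 / 2 + (rho j - dist z j.2) ≤ dist c.1 c.2 := by linarith
            have hrc : rho c ≤ 2 * dist z c.1 := by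
              have h3 := hrho_le_hi c hc
              have h4 : hi c ≤ 2 * dist z c.1 := min_le_left _ _
              linarith
            have := hdc hmcpos
            linarith
          · have hlc : lo c = dist z c.2 - D := by rw [hlo]; exact heql
            have h1 : rho j - dist z j.2 ≤ -D := by rw [hlc] at hval; linarith
            linarith
        · -- lam j = dist j.2 c.2 - hi c
          have hval : rho j - dist z j.2 ≤ dist z c.2 - hi c := by
            rw [heqm] at hlamj
            have h9 : rho j ≤ dist j.2 c.2 - hi c := hlamj ▸ hrj
            linarith
          rcases min_cases (2 * dist z c.1) (dist z c.2 + D) with ⟨heqc, _⟩ | ⟨heqc, _⟩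
          · have hic : hi c = 2 * dist z c.1 := by rw [hhi]; exact heqc
            have h1 : rho j - dist z j.2 ≤ dist z c.2 - 2 * dist z c.1 := by
              rw [hic] at hval; linarith
            have hmcpos : 0 < dist c.1 c.2 := by linarith
            have hrc : rho c ≤ 2 * dist z c.1 := by
              have h3 := hrho_le_hi c hc
              have h4 : hi c ≤ 2 * dist z c.1 := min_le_left _ _
              linarith
            have := hdc hmcpos
            linarith
          · have hic : hi c = dist z c.2 + D := by rw [hhi]; exact heqc
            have h1 : rho j - dist z j.2 ≤ -D := by rw [hic] at hval; linarith
            linarith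
    rcases abs_cases (rho j - dist z j.2) with ⟨heq, _⟩ | ⟨heq, _⟩ <;> rw [heq] <;> linarith
  -- realize the new point
  set LE : List (U × ℝ) := (z, rz) :: l.map (fun a => (a.2, rho a)) with hLE
  have hmemLE : ∀ x ∈ LE, x = (z, rz) ∨ ∃ a ∈ S, x = (a.2, rho a) := by
    intro x hx
    rcases List.mem_cons.1 hx with h | h
    · left; exact h
    · right
      obtain ⟨a, hal, hae⟩ := List.mem_map.1 h
      exact ⟨a, List.mem_toFinset.2 hal, hae.symm⟩
  have hKat : ∀ x ∈ LE, ∀ y ∈ LE, |x.2 - y.2| ≤ dist x.1 y.1 ∧ dist x.1 y.1 ≤ x.2 + y.2 := by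
    intro x hx y hy
    rcases hmemLE x hx with rfl | ⟨a, haS, rfl⟩ <;> rcases hmemLE y hy with rfl | ⟨b, hbS, rfl⟩
    · simp only [sub_self, abs_zero, dist_self]
      exact ⟨le_refl _, by linarith⟩
    · constructor
      · have := hP6b b hbS
        rw [abs_sub_comm]
        simpa [dist_comm] using this
      · have := hP6a b hbS
        simp only []
        linarith
    · constructor
      · have := hP6b a haS
        simpa [dist_comm] using this
      · have := hP6a a haS
        simp only []
        rw [dist_comm]
        linarith
    · constructor
      · rw [abs_le]
        have h1 := hrho_lip a haS b hbS
        have h2 := hrho_lip b hbS a haS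
        have hcm : dist b.2 a.2 = dist a.2 b.2 := dist_comm _ _
        constructor <;> simp only [] <;> linarith
      · have := hrho_sum a haS b hbS
        simp only []
        linarith
  obtain ⟨w, hw⟩ := realize hU LE hKat
  have hwz : dist w z = rz := hw _ (List.mem_cons_self)
  have hwa : ∀ a ∈ S, dist w a.2 = rho a := by
    intro a haS
    exact hw (a.2, rho a) (List.mem_cons_of_mem _ (List.mem_map.2 ⟨a, hmemS a haS, rfl⟩))
  refine ⟨w, ?_, ?_⟩
  · intro x hx y hy
    rcases List.mem_cons.1 hx with rfl | hxl <;> rcases List.mem_cons.1 hy with rfl | hyl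
    · simp only [dist_self]
      exact ⟨by linarith, by linarith⟩
    · have hyS : y ∈ S := List.mem_toFinset.2 hyl
      have h1 : dist w y.2 = rho y := hwa y hyS
      have h2 : dist z y.1 / 2 ≤ rho y := le_trans (le_max_left _ _) (hrho_ge_lo y hyS)
      have h3 : rho y ≤ 2 * dist z y.1 := le_trans (hrho_le_hi y hyS) (min_le_left _ _)
      constructor <;> simp only [] <;> linarith
    · have hxS : x ∈ S := List.mem_toFinset.2 hxl
      have h1 : dist w x.2 = rho x := hwa x hxS
      have h2 : dist z x.1 / 2 ≤ rho x := le_trans (le_max_left _ _) (hrho_ge_lo x hxS)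
      have h3 : rho x ≤ 2 * dist z x.1 := le_trans (hrho_le_hi x hxS) (min_le_left _ _)
      have hcm1 : dist x.1 z = dist z x.1 := dist_comm _ _
      have hcm2 : dist x.2 w = dist w x.2 := dist_comm _ _
      constructor <;> simp only [] <;> linarith
    · exact hl x hxl y hyl
  · intro x hx
    rcases List.mem_cons.1 hx with rfl | hxl
    · have hcm : dist z w = dist w z := dist_comm _ _
      constructor
      · simp only []
        have : 8 * D = s := by rw [hDdef]; ring
        rw [hcm, hwz]
        linarith
      · simp only []
        rcases lt_or_ge (dist z p) R with hzR | hzR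
        · have h5 := hP5 hzR
          have h6 : 8 * rz ≤ R - rho a0 := by
            have : rz ≤ (R - rho a0) / 8 := by
              apply Finset.sup'_le
              intro j hj
              linarith [h5 j hj]
            linarith
          have h7 : dist w p = rho a0 := by
            have := hwa a0 ha0S
            rw [ha0p] at this
            exact this
          rw [hcm, hwz]
          refine le_trans ?_ (le_max_left _ _)
          rw [h7]
          linarith
        · have hs : s = 0 := max_eq_right (by linarith)
          have hrz0 : rz = 0 := le_antisymm (by rw [hDdef, hs] at hrz_le_D; linarith) hrz_nn
          have hwz0 : dist z w = 0 := by rw [hcm, hwz, hrz0]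
          rw [hwz0]
          simpa using le_max_right (R - dist w p) 0
    · exact hd x hxl

lemma pairs_swap {l : List (U × U)} (h : PairsP l) : PairsP (l.map Prod.swap) := by
  intro a ha b hb
  obtain ⟨a', ha', rfl⟩ := List.mem_map.1 ha
  obtain ⟨b', hb', rfl⟩ := List.mem_map.1 hb
  have := h a' ha' b' hb'
  simp only [Prod.fst_swap, Prod.snd_swap]
  exact ⟨this.2, this.1⟩

lemma disp_swap {p : U} {R : ℝ} {l : List (U × U)} (h : DispP p R l) :
    DispP p R (l.map Prod.swap) := by
  intro a ha
  obtain ⟨a', ha', rfl⟩ := List.mem_map.1 ha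
  have := h a' ha'
  simp only [Prod.fst_swap, Prod.snd_swap]
  rw [dist_comm]
  exact ⟨this.2, this.1⟩

lemma ext_step_rev (hU : IsUrysohn U) (p : U) (R : ℝ) (l : List (U × U))
    (hl : PairsP l) (hd : DispP p R l) (h0 : ∃ a ∈ l, a.1 = p) (z : U) :
    ∃ w : U, PairsP ((w, z) :: l) ∧ DispP p R ((w, z) :: l) := by
  obtain ⟨a0, ha0, ha0e⟩ := h0
  obtain ⟨w, h1, h2⟩ := ext_step hU p R (l.map Prod.swap) (pairs_swap hl) (disp_swap hd)
    ⟨a0.swap, List.mem_map.2 ⟨a0, ha0, rfl⟩, by simp [ha0e]⟩ z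
  refine ⟨w, ?_, ?_⟩
  · have := pairs_swap h1
    simpa [List.map_map, Prod.swap_swap_eq] using this
  · have := disp_swap h2
    simpa [List.map_map, Prod.swap_swap_eq] using this

lemma step_move (hU : IsUrysohn U) (p q : U) (hpq : 0 < dist p q) :
    ∃ g : U → U, Function.Bijective g ∧
      (∀ u v : U, dist u v ≤ 2 * dist (g u) (g v) ∧ dist (g u) (g v) ≤ 2 * dist u v) ∧
      g p = q ∧ ∀ z : U, 16 * dist p q ≤ dist z p → g z = z := by
  classical
  haveI : CompleteSpace U := hU.1
  haveI : TopologicalSpace.SeparableSpace U := hU.2.1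
  haveI : Nonempty U := ⟨p⟩
  set R : ℝ := 16 * dist p q with hR
  set e : ℕ → U := TopologicalSpace.denseSeq U with he
  have hdense : DenseRange e := TopologicalSpace.denseRange_denseSeq U
  -- initial list
  have hl0 : PairsP [(p, q)] := by
    intro a ha b hb
    simp only [List.mem_singleton] at ha hb
    subst ha; subst hb
    simp
  have hd0 : DispP p R [(p, q)] := by
    intro a ha
    simp only [List.mem_singleton] at ha
    subst ha
    constructor
    · simp only [dist_self, sub_zero]
      refine le_trans ?_ (le_max_left _ _)
      linarith
    · refine le_trans ?_ (le_max_left _ _)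
      rw [dist_comm q p]
      linarith
  obtain ⟨w1, hl1, hd1⟩ := ext_step_rev hU p R [(p, q)] hl0 hd0
    ⟨(p, q), List.mem_singleton_self _, rfl⟩ p
  have ht1 : PairsP ((w1, p) :: [(p, q)]) ∧ DispP p R ((w1, p) :: [(p, q)]) ∧
      (∃ a ∈ (w1, p) :: [(p, q)], a.2 = p) ∧ (∃ a ∈ (w1, p) :: [(p, q)], a.1 = p) :=
    ⟨hl1, hd1, ⟨(w1, p), List.mem_cons_self, rfl⟩,
      ⟨(p, q), List.mem_cons_of_mem _ (List.mem_singleton_self _), rfl⟩⟩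
  -- chain of extensions
  have hex : ∀ (z : U) (t : {l : List (U × U) // PairsP l ∧ DispP p R l ∧
      (∃ a ∈ l, a.2 = p) ∧ (∃ a ∈ l, a.1 = p)}),
      ∃ t' : {l : List (U × U) // PairsP l ∧ DispP p R l ∧
        (∃ a ∈ l, a.2 = p) ∧ (∃ a ∈ l, a.1 = p)},
      ∃ w w', t'.1 = (w', z) :: (z, w) :: t.1 := by
    rintro z ⟨l, hlp, hld, han1, han2⟩
    obtain ⟨w, hw1, hw2⟩ := ext_step hU p R l hlp hld han1 z
    obtain ⟨w', hw1', hw2'⟩ := ext_step_rev hU p R ((z, w) :: l) hw1 hw2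
      (by obtain ⟨a, hal, hae⟩ := han2; exact ⟨a, List.mem_cons_of_mem _ hal, hae⟩) z
    refine ⟨⟨(w', z) :: (z, w) :: l, hw1', hw2', ?_, ?_⟩, w, w', rfl⟩
    · obtain ⟨a, hal, hae⟩ := han1
      exact ⟨a, List.mem_cons_of_mem _ (List.mem_cons_of_mem _ hal), hae⟩
    · obtain ⟨a, hal, hae⟩ := han2
      exact ⟨a, List.mem_cons_of_mem _ (List.mem_cons_of_mem _ hal), hae⟩
  let T := {l : List (U × U) // PairsP l ∧ DispP p R l ∧
      (∃ a ∈ l, a.2 = p) ∧ (∃ a ∈ l, a.1 = p)}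
  let step : U → T → T := fun z t => (hex z t).choose
  let c : ℕ → T := fun n => Nat.rec ⟨(w1, p) :: [(p, q)], ht1⟩ (fun n ih => step (e n) ih) n
  have hcsucc : ∀ n : ℕ, ∃ w w', (c (n + 1)).1 = (w', e n) :: (e n, w) :: (c n).1 :=
    fun n => (hex (e n) (c n)).choose_spec
  have hmono : ∀ n : ℕ, ∀ x ∈ (c n).1, x ∈ (c (n + 1)).1 := by
    intro n x hx
    obtain ⟨w, w', hsh⟩ := hcsucc n
    rw [hsh]
    exact List.mem_cons_of_mem _ (List.mem_cons_of_mem _ hx)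
  have hmonole : ∀ m n : ℕ, m ≤ n → ∀ x ∈ (c m).1, x ∈ (c n).1 := by
    intro m n hmn
    induction n, hmn using Nat.le_induction with
    | base => exact fun x hx => hx
    | succ n hmn ih => exact fun x hx => hmono n x (ih x hx)
  set G : Set (U × U) := {x | ∃ n, x ∈ (c n).1} with hG
  have hGpairs : ∀ a ∈ G, ∀ b ∈ G,
      dist a.1 b.1 ≤ 2 * dist a.2 b.2 ∧ dist a.2 b.2 ≤ 2 * dist a.1 b.1 := by
    rintro a ⟨n, hn⟩ b ⟨m, hm⟩
    exact (c (max n m)).2.1 a (hmonole n _ (le_max_left _ _) a hn)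
      b (hmonole m _ (le_max_right _ _) b hm)
  have hGdisp : ∀ a ∈ G, 8 * dist a.1 a.2 ≤ max (R - dist a.1 p) 0 ∧
      8 * dist a.1 a.2 ≤ max (R - dist a.2 p) 0 := by
    rintro a ⟨n, hn⟩
    exact (c n).2.2.1 a hn
  have hGpq : (p, q) ∈ G := by
    refine ⟨0, ?_⟩
    exact List.mem_cons_of_mem _ (List.mem_singleton_self _)
  have hGfwd : ∀ n : ℕ, ∃ w, (e n, w) ∈ G := by
    intro n
    obtain ⟨w, w', hsh⟩ := hcsucc n
    exact ⟨w, n + 1, by rw [hsh]; exact List.mem_cons_of_mem _ (List.mem_cons_self)⟩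
  have hGbwd : ∀ n : ℕ, ∃ w', (w', e n) ∈ G := by
    intro n
    obtain ⟨w, w', hsh⟩ := hcsucc n
    exact ⟨w', n + 1, by rw [hsh]; exact List.mem_cons_self⟩
  have hdense1 : ∀ (u : U) (ε : ℝ), 0 < ε → ∃ a ∈ G, dist a.1 u < ε := by
    intro u ε hε
    obtain ⟨n, hn⟩ := Metric.denseRange_iff.1 hdense u ε hε
    obtain ⟨w, hw⟩ := hGfwd n
    exact ⟨(e n, w), hw, by rw [dist_comm]; exact hn⟩
  have hdense2 : ∀ (v : U) (ε : ℝ), 0 < ε → ∃ a ∈ G, dist a.2 v < ε := by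
    intro v ε hε
    obtain ⟨n, hn⟩ := Metric.denseRange_iff.1 hdense v ε hε
    obtain ⟨w', hw⟩ := hGbwd n
    exact ⟨(w', e n), hw, by rw [dist_comm]; exact hn⟩
  -- the limit map
  have hglim : ∀ u : U, ∃ v : U, ∀ a ∈ G, dist a.2 v ≤ 2 * dist a.1 u := by
    intro u
    have hseq : ∀ n : ℕ, ∃ a ∈ G, dist a.1 u < 1 / (n + 1) := by
      intro n
      exact hdense1 u _ (by positivity)
    choose A hAG hAu using hseq
    have harith : ∀ n : ℕ, (0:ℝ) < 1 / (n + 1) := by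
      intro n; positivity
    have hcauchy : CauchySeq (fun n => (A n).2) := by
      rw [Metric.cauchySeq_iff]
      intro ε hε
      obtain ⟨N, hN⟩ := exists_nat_gt (4 / ε)
      have hN0 : (0:ℝ) < N + 1 := by positivity
      refine ⟨N, fun m hm n hn => ?_⟩
      have h1 := (hGpairs _ (hAG m) _ (hAG n)).2
      have ht : dist (A m).1 (A n).1 ≤ dist (A m).1 u + dist (A n).1 u := by
        rw [dist_comm (A n).1 u]
        exact dist_triangle _ _ _
      have hm1 : (1:ℝ) / (m + 1) ≤ 1 / (N + 1) := by
        apply one_div_le_one_div_of_le hN0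
        have : (N:ℝ) ≤ m := Nat.cast_le.2 hm
        linarith
      have hn1 : (1:ℝ) / (n + 1) ≤ 1 / (N + 1) := by
        apply one_div_le_one_div_of_le hN0
        have : (N:ℝ) ≤ n := Nat.cast_le.2 hn
        linarith
      have hNε : 4 / (N + 1) < ε := by
        rw [div_lt_iff₀ hN0]
        have h4 : 4 / ε < N := hN
        rw [div_lt_iff₀ hε] at h4
        linarith
      have hre : 4 / ((N:ℝ) + 1) = 2 * (1 / (N + 1)) + 2 * (1 / (N + 1)) := by ring
      calc dist (A m).2 (A n).2 ≤ 2 * dist (A m).1 (A n).1 := h1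
        _ < ε := by linarith [hAu m, hAu n]
    obtain ⟨v, hv⟩ := cauchySeq_tendsto_of_complete hcauchy
    refine ⟨v, fun a ha => ?_⟩
    apply le_of_forall_pos_le_add
    intro ε hε
    obtain ⟨N1, hN1⟩ := Metric.tendsto_atTop.1 hv (ε / 2) (by positivity)
    obtain ⟨N2, hN2⟩ := exists_nat_gt (4 / ε)
    set n := max N1 N2 with hn
    have hd1 : dist ((A n).2) v < ε / 2 := hN1 n (le_max_left _ _)
    have h1 := (hGpairs _ ha _ (hAG n)).2
    have ht : dist a.1 (A n).1 ≤ dist a.1 u + dist (A n).1 u := by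
      rw [dist_comm (A n).1 u]
      exact dist_triangle _ _ _
    have htr : dist a.2 v ≤ dist a.2 (A n).2 + dist ((A n).2) v := dist_triangle _ _ _
    have hN20 : (0:ℝ) < N2 + 1 := by positivity
    have hn1 : (1:ℝ) / (n + 1) ≤ 1 / (N2 + 1) := by
      apply one_div_le_one_div_of_le hN20
      have : (N2:ℝ) ≤ n := Nat.cast_le.2 (le_max_right _ _)
      linarith
    have hNε : 4 / (N2 + 1) < ε := by
      rw [div_lt_iff₀ hN20]
      have h4 : 4 / ε < N2 := hN2
      rw [div_lt_iff₀ hε] at h4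
      linarith
    have := hAu n
    have hre : 4 / ((N2:ℝ) + 1) = 2 * (1 / (N2 + 1)) + 2 * (1 / (N2 + 1)) := by ring
    calc dist a.2 v ≤ dist a.2 (A n).2 + dist ((A n).2) v := htr
      _ ≤ 2 * dist a.1 (A n).1 + ε / 2 := by linarith
      _ ≤ 2 * (dist a.1 u + dist (A n).1 u) + ε / 2 := by linarith
      _ ≤ 2 * dist a.1 u + ε := by linarith
  set g : U → U := fun u => (hglim u).choose with hgdef
  have hg : ∀ u : U, ∀ a ∈ G, dist a.2 (g u) ≤ 2 * dist a.1 u := by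
    intro u
    exact (hglim u).choose_spec
  have hgraph : ∀ a ∈ G, g a.1 = a.2 := by
    intro a ha
    have := hg a.1 a ha
    rw [dist_self, mul_zero] at this
    exact (eq_of_dist_eq_zero (le_antisymm this dist_nonneg)).symm
  have hupper : ∀ u v : U, dist (g u) (g v) ≤ 2 * dist u v := by
    intro u v
    apply le_of_forall_pos_le_add
    intro ε hε
    obtain ⟨a, haG, hau⟩ := hdense1 u (ε / 8) (by positivity)
    obtain ⟨b, hbG, hbv⟩ := hdense1 v (ε / 8) (by positivity)
    have h1 : dist a.2 (g u) ≤ 2 * dist a.1 u := hg u a haG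
    have h2 : dist b.2 (g v) ≤ 2 * dist b.1 v := hg v b hbG
    have h3 : dist a.2 b.2 ≤ 2 * dist a.1 b.1 := (hGpairs a haG b hbG).2
    have ht1 : dist (g u) (g v) ≤ dist (g u) a.2 + dist a.2 b.2 + dist b.2 (g v) :=
      dist_triangle4 _ _ _ _
    have ht2 : dist a.1 b.1 ≤ dist a.1 u + dist u v + dist v b.1 := dist_triangle4 _ _ _ _
    have hc1 : dist (g u) a.2 = dist a.2 (g u) := dist_comm _ _
    have hc2 : dist v b.1 = dist b.1 v := dist_comm _ _
    linarith
  have hlower : ∀ u v : U, dist u v ≤ 2 * dist (g u) (g v) := by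
    intro u v
    apply le_of_forall_pos_le_add
    intro ε hε
    obtain ⟨a, haG, hau⟩ := hdense1 u (ε / 10) (by positivity)
    obtain ⟨b, hbG, hbv⟩ := hdense1 v (ε / 10) (by positivity)
    have h1 : dist a.2 (g u) ≤ 2 * dist a.1 u := hg u a haG
    have h2 : dist b.2 (g v) ≤ 2 * dist b.1 v := hg v b hbG
    have h3 : dist a.1 b.1 ≤ 2 * dist a.2 b.2 := (hGpairs a haG b hbG).1
    have ht1 : dist u v ≤ dist u a.1 + dist a.1 b.1 + dist b.1 v := dist_triangle4 _ _ _ _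
    have ht2 : dist a.2 b.2 ≤ dist a.2 (g u) + dist (g u) (g v) + dist (g v) b.2 :=
      dist_triangle4 _ _ _ _
    have hc1 : dist u a.1 = dist a.1 u := dist_comm _ _
    have hc2 : dist (g v) b.2 = dist b.2 (g v) := dist_comm _ _
    linarith
  have hdisp : ∀ u : U, 8 * dist u (g u) ≤ max (R - dist u p) 0 := by
    intro u
    apply le_of_forall_pos_le_add
    intro ε hε
    obtain ⟨a, haG, hau⟩ := hdense1 u (ε / 25) (by positivity)
    have h1 : dist a.2 (g u) ≤ 2 * dist a.1 u := hg u a haG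
    have h2 := (hGdisp a haG).1
    have ht : dist u (g u) ≤ dist u a.1 + dist a.1 a.2 + dist a.2 (g u) :=
      dist_triangle4 _ _ _ _
    have hc1 : dist u a.1 = dist a.1 u := dist_comm _ _
    have hmx : max (R - dist a.1 p) 0 ≤ max (R - dist u p) 0 + dist a.1 u := by
      apply max_le
      · have htp : dist u p ≤ dist u a.1 + dist a.1 p := dist_triangle _ _ _
        have : R - dist u p ≤ max (R - dist u p) 0 := le_max_left _ _
        linarith
      · have : (0:ℝ) ≤ max (R - dist u p) 0 := le_max_right _ _
        linarith [dist_nonneg (x := a.1) (y := u)]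
    linarith
  have hgp : g p = q := hgraph (p, q) hGpq
  have hinj : Function.Injective g := by
    intro u v huv
    have := hlower u v
    rw [huv, dist_self, mul_zero] at this
    exact eq_of_dist_eq_zero (le_antisymm this dist_nonneg)
  have hsurj : Function.Surjective g := by
    intro v
    have hseq : ∀ n : ℕ, ∃ a ∈ G, dist a.2 v < 1 / (n + 1) := by
      intro n
      exact hdense2 v _ (by positivity)
    choose A hAG hAv using hseq
    have hcauchy : CauchySeq (fun n => (A n).1) := by
      rw [Metric.cauchySeq_iff]
      intro ε hε
      obtain ⟨N, hN⟩ := exists_nat_gt (8 / ε)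
      have hN0 : (0:ℝ) < N + 1 := by positivity
      refine ⟨N, fun m hm n hn => ?_⟩
      have h1 := (hGpairs _ (hAG m) _ (hAG n)).1
      have ht : dist (A m).2 (A n).2 ≤ dist (A m).2 v + dist (A n).2 v := by
        rw [dist_comm (A n).2 v]
        exact dist_triangle _ _ _
      have hm1 : (1:ℝ) / (m + 1) ≤ 1 / (N + 1) := by
        apply one_div_le_one_div_of_le hN0
        have : (N:ℝ) ≤ m := Nat.cast_le.2 hm
        linarith
      have hn1 : (1:ℝ) / (n + 1) ≤ 1 / (N + 1) := by
        apply one_div_le_one_div_of_le hN0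
        have : (N:ℝ) ≤ n := Nat.cast_le.2 hn
        linarith
      have hNε : 8 / (N + 1) < ε := by
        rw [div_lt_iff₀ hN0]
        have h4 : 8 / ε < N := hN
        rw [div_lt_iff₀ hε] at h4
        linarith
      have hre : 8 / ((N:ℝ) + 1) = 2 * (1 / (N + 1)) + 2 * (1 / (N + 1)) + 2 * (1 / (N + 1)) + 2 * (1 / (N + 1)) := by ring
      calc dist (A m).1 (A n).1 ≤ 2 * dist (A m).2 (A n).2 := h1
        _ < ε := by linarith [hAv m, hAv n]
    obtain ⟨u, hu⟩ := cauchySeq_tendsto_of_complete hcauchy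
    refine ⟨u, ?_⟩
    have : dist (g u) v ≤ 0 := by
      apply le_of_forall_pos_le_add
      intro ε hε
      obtain ⟨N1, hN1⟩ := Metric.tendsto_atTop.1 hu (ε / 4) (by positivity)
      obtain ⟨N2, hN2⟩ := exists_nat_gt (2 / ε)
      set n := max N1 N2 with hn
      have hd1 : dist ((A n).1) u < ε / 4 := hN1 n (le_max_left _ _)
      have hgA : g (A n).1 = (A n).2 := hgraph _ (hAG n)
      have ht : dist (g u) v ≤ dist (g u) (g (A n).1) + dist (g (A n).1) v :=
        dist_triangle _ _ _
      have h1 : dist (g u) (g (A n).1) ≤ 2 * dist u (A n).1 := hupper _ _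
      have hc1 : dist u (A n).1 = dist ((A n).1) u := dist_comm _ _
      have hN20 : (0:ℝ) < N2 + 1 := by positivity
      have hn1 : (1:ℝ) / (n + 1) ≤ 1 / (N2 + 1) := by
        apply one_div_le_one_div_of_le hN20
        have : (N2:ℝ) ≤ n := Nat.cast_le.2 (le_max_right _ _)
        linarith
      have hNε : 2 / (N2 + 1) < ε := by
        rw [div_lt_iff₀ hN20]
        have h4 : 2 / ε < N2 := hN2
        rw [div_lt_iff₀ hε] at h4
        linarith
      have hAvn := hAv n
      have hre : 2 / ((N2:ℝ) + 1) = 2 * (1 / (N2 + 1)) := by ring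
      calc dist (g u) v ≤ dist (g u) (g (A n).1) + dist ((A n).2) v := by
            rw [← hgA]; exact ht
        _ ≤ 0 + ε := by linarith
    exact (eq_of_dist_eq_zero (le_antisymm this dist_nonneg))
  refine ⟨g, ⟨hinj, hsurj⟩, fun u v => ⟨hlower u v, hupper u v⟩, hgp, ?_⟩
  intro z hz
  have h1 := hdisp z
  have h2 : max (R - dist z p) 0 = 0 := max_eq_right (by linarith)
  rw [h2] at h1
  have : dist z (g z) = 0 := le_antisymm (by linarith) dist_nonneg
  exact (eq_of_dist_eq_zero this).symm


end SegMove

/-- `K̂` is increasing, and the endpoints of a line segment `L` in the Urysohn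
space can be matched by a `K̂(length(L)/r)`-bilipschitz bijection supported in
the open `r`-neighborhood `B(L,r)` of `L`. -/
theorem segment_endpoint_move (U : Type) [MetricSpace U] (hU : IsUrysohn U) :
    (∀ s t : ℝ, 0 < s → s ≤ t → Khat s ≤ Khat t) ∧
    ∀ (a b : ℝ), a < b → ∀ h : ℝ → U,
      (∀ s ∈ Set.Icc a b, ∀ t ∈ Set.Icc a b, dist (h s) (h t) = |s - t|) →
      ∀ r : ℝ, 0 < r →
        ∃ g : U → U, Function.Bijective g ∧
          BilipschitzOn ((Khat ((b - a) / r) : ℝ)) g Set.univ ∧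
          g (h a) = h b ∧
          ∀ z, z ∉ Metric.thickening r (h '' Set.Icc a b) → g z = z := by
  constructor
  · intro s t hs hst
    have hfl : Nat.floor (16 * s) ≤ Nat.floor (16 * t) := Nat.floor_le_floor (by linarith)
    exact Nat.pow_le_pow_right (by norm_num) (by omega)
  intro a b hab h hiso r hr
  set n : ℕ := Nat.floor (16 * ((b - a) / r)) + 1 with hn
  have hn0 : 0 < n := Nat.succ_pos _
  have hba : 0 < b - a := by linarith
  have hnpos : (0:ℝ) < n := by exact_mod_cast hn0
  have hnne : (n:ℝ) ≠ 0 := ne_of_gt hnpos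
  set δ : ℝ := (b - a) / n with hδ
  have hδpos : 0 < δ := div_pos hba hnpos
  have h16 : 16 * δ < r := by
    have h1 : 16 * ((b - a) / r) < n := by
      rw [hn]
      push_cast
      exact Nat.lt_floor_add_one _
    have h2 : 16 * (b - a) < n * r := by
      have h3 : (16 * (b - a)) / r < n := by
        rw [show (16 * (b - a)) / r = 16 * ((b - a) / r) by ring]
        exact h1
      rw [div_lt_iff₀ hr] at h3
      linarith
    rw [hδ, show 16 * ((b - a) / n) = (16 * (b - a)) / n by ring, div_lt_iff₀ hnpos]
    linarith
  set t : ℕ → ℝ := fun i => a + i * δ with ht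
  have htmem : ∀ i : ℕ, i ≤ n → t i ∈ Set.Icc a b := by
    intro i hi
    constructor
    · have : (0:ℝ) ≤ i * δ := by positivity
      simp only [ht]
      linarith
    · have hi' : (i:ℝ) ≤ n := by exact_mod_cast hi
      have h1 : (i:ℝ) * δ ≤ n * δ := by nlinarith
      have h2 : (n:ℝ) * δ = b - a := by
        rw [hδ, mul_div_cancel₀ _ hnne]
      simp only [ht]
      linarith
  have hdist : ∀ i : ℕ, i + 1 ≤ n → dist (h (t i)) (h (t (i + 1))) = δ := by
    intro i hi
    rw [hiso _ (htmem i (by omega)) _ (htmem (i + 1) hi)]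
    have : t i - t (i + 1) = -δ := by
      simp only [ht]
      push_cast
      ring
    rw [this, abs_neg, abs_of_pos hδpos]
  have hcomp : ∀ m : ℕ, m ≤ n → ∃ g : U → U, Function.Bijective g ∧
      (∀ u v, dist u v ≤ 2 ^ m * dist (g u) (g v) ∧ dist (g u) (g v) ≤ 2 ^ m * dist u v) ∧
      g (h a) = h (t m) ∧
      ∀ z, z ∉ Metric.thickening r (h '' Set.Icc a b) → g z = z := by
    intro m
    induction m with
    | zero =>
      intro _
      refine ⟨id, Function.bijective_id, by simp, ?_, fun z _ => rfl⟩
      simp only [ht, id_eq, Nat.cast_zero, zero_mul, add_zero]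
    | succ m ih =>
      intro hm
      obtain ⟨g, hgbij, hgbl, hga, hgsupp⟩ := ih (by omega)
      obtain ⟨g', hg'bij, hg'bl, hg'pq, hg'supp⟩ :=
        SegMove.step_move hU (h (t m)) (h (t (m + 1))) (by rw [hdist m hm]; exact hδpos)
      refine ⟨g' ∘ g, hg'bij.comp hgbij, ?_, ?_, ?_⟩
      · intro u v
        have h1 := hgbl u v
        have h2 := hg'bl (g u) (g v)
        have hpw : (0:ℝ) ≤ 2 ^ m := by positivity
        constructor
        · calc dist u v ≤ 2 ^ m * dist (g u) (g v) := h1.1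
            _ ≤ 2 ^ m * (2 * dist (g' (g u)) (g' (g v))) :=
                mul_le_mul_of_nonneg_left h2.1 hpw
            _ = 2 ^ (m + 1) * dist ((g' ∘ g) u) ((g' ∘ g) v) := by
                simp only [Function.comp]
                ring
        · calc dist ((g' ∘ g) u) ((g' ∘ g) v) ≤ 2 * dist (g u) (g v) := h2.2
            _ ≤ 2 * (2 ^ m * dist u v) := by linarith [h1.2]
            _ = 2 ^ (m + 1) * dist u v := by ring
      · simp only [Function.comp_apply]
        rw [hga, hg'pq]
      · intro z hz
        have h1 : g z = z := hgsupp z hz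
        have h2 : g' z = z := by
          apply hg'supp
          rw [hdist m hm]
          have hfar : r ≤ dist z (h (t m)) := by
            by_contra hlt
            push_neg at hlt
            exact hz (Metric.mem_thickening_iff.2
              ⟨h (t m), ⟨t m, htmem m (by omega), rfl⟩, hlt⟩)
          linarith
        simp only [Function.comp_apply, h1, h2]
  obtain ⟨g, hgbij, hgbl, hga, hgsupp⟩ := hcomp n le_rfl
  have htn : t n = b := by
    simp only [ht, hδ]
    rw [mul_div_cancel₀ _ hnne]
    ring
  have hK : ((Khat ((b - a) / r) : ℕ) : ℝ) = 2 ^ n := by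
    rw [Khat, hn]
    push_cast
    ring
  refine ⟨g, hgbij, ?_, by rw [hga, htn], hgsupp⟩
  intro u _ v _
  have h1 := hgbl u v
  have hpow : (0:ℝ) < 2 ^ n := by positivity
  constructor
  · rw [hK, div_mul_eq_mul_div, one_mul, div_le_iff₀ hpow]
    linarith [h1.1]
  · rw [hK]
    exact h1.2
end
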